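/- arXiv:2408.13037 — 4 statements merged into one kernel-verified Lean document; each statement's English description precedes it below -/
import Mathlib

section
/- Let G be a finite abelian p-group, n, w positive integers, and B a Haar-uniform random n×n band matrix over Z_p with band width w (i.e., uniform on the set of matrices with B(i,j)=0 whenever |i-j|>w). For a fixed vector g in G^n (extended by zeros outside [1,n]), define H_g(k) = ⟨g(j) : k-w ≤ j ≤ k+w⟩ ≤ G for k in [1,n]. Then P(B g = 0) = ∏_{k=1}^n |H_g(k)|^{-1}. -/
/-!
`B ↦ B g` is additive, and it maps the band matrices onto `∏ₖ H_g(k)`: row `k` of a band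
matrix is an arbitrary vector supported on `|j - k| ≤ w`, and since `G` is killed by some `p ^ K`,
the `ℤ_[p]`-span of a subset of `G` is just the subgroup it generates. Invariance of `μ` under
translation by band matrices makes all fibres of `B ↦ B g` over this image equally likely, and
they cover a set of full measure, so the kernel has measure `(∏ₖ |H_g(k)|)⁻¹`. The fibres are
measurable because `B ↦ B g` factors through reduction of the entries modulo `p ^ K`.
-/

open MeasureTheory
open scoped ENNReal

theorem exists_forall_pow_nsmul_eq_zero_of_finite {G : Type*} [AddMonoid G] [Finite G] {p : ℕ}
    (hG : ∀ g : G, ∃ k : ℕ, (p ^ k : ℕ) • g = 0) : ∃ K : ℕ, ∀ g : G, (p ^ K : ℕ) • g = 0 := by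
  choose k hk using hG
  have := Fintype.ofFinite G
  refine ⟨Finset.univ.sup k, fun g => ?_⟩
  obtain ⟨m, hm⟩ := Nat.exists_eq_add_of_le (Finset.le_sup (f := k) (Finset.mem_univ g))
  rw [hm, pow_add, mul_nsmul, hk, nsmul_zero]

theorem Submodule.map_compLeft_pi {R M N I : Type*} [Semiring R] [AddCommMonoid M]
    [AddCommMonoid N] [Module R M] [Module R N] (f : M →ₗ[R] N) (p : I → Submodule R M) :
    (Submodule.pi Set.univ p).map (f.compLeft I) = Submodule.pi Set.univ fun i => (p i).map f := by
  ext y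
  simp only [Submodule.mem_map, Submodule.mem_pi, Set.mem_univ, true_imp_iff]
  constructor
  · rintro ⟨x, hx, rfl⟩ i
    exact ⟨x i, hx i, rfl⟩
  · intro hy
    choose x hx hxy using hy
    exact ⟨x, hx, funext hxy⟩

theorem Submodule.card_pi_univ {R I : Type*} {M : I → Type*} [Fintype I] [Semiring R]
    [∀ i, AddCommMonoid (M i)] [∀ i, Module R (M i)] (p : ∀ i, Submodule R (M i)) :
    Nat.card (Submodule.pi Set.univ p) = ∏ i, Nat.card (p i) :=
  (Nat.card_congr (Equiv.Set.univPi fun i => (p i : Set (M i)))).trans Nat.card_pi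

theorem Submodule.map_linearCombination_pi_compl_bot {ι R M : Type*} [Fintype ι] [Semiring R]
    [AddCommMonoid M] [Module R M] (v : ι → M) (T : Set ι) :
    (Submodule.pi Tᶜ fun _ => ⊥).map (Fintype.linearCombination R v) =
      Submodule.span R (v '' T) := by
  classical
  refine le_antisymm ?_ (Submodule.span_le.2 ?_)
  · rintro _ ⟨c, hc, rfl⟩
    rw [Fintype.linearCombination_apply]
    refine Submodule.sum_mem _ fun j _ => ?_
    by_cases hj : j ∈ T
    · exact Submodule.smul_mem _ _ (Submodule.subset_span ⟨j, hj, rfl⟩)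
    · rw [(Submodule.mem_bot R).1 (hc j hj), zero_smul]
      exact zero_mem _
  · rintro _ ⟨j, hj, rfl⟩
    refine ⟨Pi.single j 1, fun k hk => ?_, by simp⟩
    rw [Pi.single_eq_of_ne (ne_of_mem_of_not_mem hj hk).symm]
    exact zero_mem _

def Matrix.smulVecLinearMap {m ι R G : Type*} [Fintype ι] [Semiring R] [AddCommMonoid G]
    [Module R G] (g : ι → G) : Matrix m ι R →ₗ[R] m → G :=
  (Fintype.linearCombination R g).compLeft m

theorem Matrix.smulVecLinearMap_apply {m ι R G : Type*} [Fintype ι] [Semiring R]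
    [AddCommMonoid G] [Module R G] (g : ι → G) (B : Matrix m ι R) (i : m) :
    Matrix.smulVecLinearMap g B i = ∑ j, B i j • g j :=
  Fintype.linearCombination_apply R g (B i)

def bandMatrices (R : Type*) [Semiring R] (n w : ℕ) : Submodule R (Matrix (Fin n) (Fin n) R) :=
  Submodule.pi Set.univ fun i => Submodule.pi {j | |(j : ℤ) - (i : ℤ)| ≤ w}ᶜ fun _ => ⊥

theorem mem_bandMatrices {R : Type*} [Semiring R] {n w : ℕ} {B : Matrix (Fin n) (Fin n) R} :
    B ∈ bandMatrices R n w ↔ ∀ i j : Fin n, (w : ℤ) < |(i : ℤ) - (j : ℤ)| → B i j = 0 := by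
  change (∀ i : Fin n, i ∈ Set.univ → ∀ j : Fin n, j ∈ {j : Fin n | |(j : ℤ) - (i : ℤ)| ≤ w}ᶜ →
    B i j ∈ (⊥ : Submodule R R)) ↔ _
  simp only [Set.mem_univ, Set.mem_compl_iff, Set.mem_ofPred_eq, not_le, Submodule.mem_bot,
    true_imp_iff]
  exact forall_congr' fun i => forall_congr' fun j => by rw [abs_sub_comm]

section TranslationInvariant

variable {M A : Type*} [AddGroup M] [MeasurableSpace M] [MeasurableAdd M] [AddGroup A]
  {μ : Measure M} {S : AddSubgroup M} {φ : M →+ A}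

theorem measure_preimage_singleton_eq_measure_ker (hinv : ∀ C ∈ S, μ.map (· + C) = μ)
    (hφ : ∀ a, MeasurableSet (φ ⁻¹' {a})) {a : A} (ha : a ∈ S.map φ) :
    μ (φ ⁻¹' {a}) = μ φ.ker := by
  obtain ⟨C, hC, rfl⟩ := ha
  calc μ (φ ⁻¹' {φ C}) = μ.map (· + C) (φ ⁻¹' {φ C}) := by rw [hinv C hC]
    _ = μ φ.ker := by
      rw [Measure.map_apply (measurable_add_const C) (hφ _)]
      congr 1
      ext B
      simp only [Set.mem_preimage, Set.mem_singleton_iff, map_add, add_eq_right,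
        SetLike.mem_coe, AddMonoidHom.mem_ker]

theorem measure_ker_eq_inv_card_map [Finite A] [IsProbabilityMeasure μ] (hS : μ (↑S)ᶜ = 0)
    (hinv : ∀ C ∈ S, μ.map (· + C) = μ) (hφ : ∀ a, MeasurableSet (φ ⁻¹' {a})) :
    μ φ.ker = (Nat.card (S.map φ) : ℝ≥0∞)⁻¹ := by
  have hU : MeasurableSet (⋃ a : S.map φ, φ ⁻¹' {(a : A)}) := .iUnion fun a => hφ a
  have hSU : (S : Set M) ⊆ ⋃ a : S.map φ, φ ⁻¹' {(a : A)} := fun B hB =>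
    Set.mem_iUnion.2 ⟨⟨φ B, B, hB, rfl⟩, rfl⟩
  have hμU : μ (⋃ a : S.map φ, φ ⁻¹' {(a : A)}) = 1 :=
    (prob_compl_eq_zero_iff hU).1 (measure_mono_null (Set.compl_subset_compl.2 hSU) hS)
  have hdisj : Pairwise (Function.onFun Disjoint fun a : S.map φ => φ ⁻¹' {(a : A)}) :=
    fun a b hab => (Set.disjoint_singleton.2 (Subtype.coe_ne_coe.2 hab)).preimage φ
  rw [measure_iUnion hdisj fun a => hφ a,
    tsum_congr fun a => measure_preimage_singleton_eq_measure_ker hinv hφ a.2, ENNReal.tsum_const,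
    ENat.card_eq_coe_natCard, ENat.toENNReal_coe] at hμU
  exact ENNReal.eq_inv_of_mul_eq_one_left (by rwa [mul_comm])

end TranslationInvariant

namespace PadicInt

variable {p : ℕ} [Fact p.Prime]

theorem continuous_toZModPow (K : ℕ) : Continuous (toZModPow (p := p) K) := by
  refine continuous_discrete_rng.2 fun r => ?_
  have hfiber : toZModPow K ⁻¹' {r} =
      Metric.closedBall ((r.val : ℕ) : ℤ_[p]) ((p : ℝ) ^ (-(K : ℤ))) := by
    ext b
    rw [Set.mem_preimage, Set.mem_singleton_iff, Metric.mem_closedBall, dist_eq_norm,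
      norm_le_pow_iff_mem_span_pow, ← ker_toZModPow, RingHom.mem_ker, map_sub, map_natCast,
      sub_eq_zero, ZMod.natCast_val, ZMod.cast_id]
  rw [hfiber]
  exact IsUltrametricDist.isOpen_closedBall _
    (zpow_ne_zero _ (Nat.cast_ne_zero.2 (Fact.out : p.Prime).ne_zero))

variable {G : Type*} [AddCommGroup G] [Module ℤ_[p] G] {K : ℕ}

theorem smul_eq_nsmul_toZModPow_val (hK : ∀ x : G, (p ^ K : ℕ) • x = 0) (a : ℤ_[p]) (x : G) :
    a • x = (toZModPow K a).val • x := by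
  have hker : a - ((toZModPow K a).val : ℤ_[p]) ∈ Ideal.span {(p : ℤ_[p]) ^ K} := by
    rw [← ker_toZModPow, RingHom.mem_ker, map_sub, map_natCast, ZMod.natCast_val, ZMod.cast_id,
      sub_self]
  obtain ⟨u, hu⟩ := Ideal.mem_span_singleton'.mp hker
  have hx : (p : ℤ_[p]) ^ K • x = 0 := by rw [← Nat.cast_pow, Nat.cast_smul_eq_nsmul, hK]
  rw [← sub_eq_zero, ← Nat.cast_smul_eq_nsmul ℤ_[p], ← sub_smul, ← hu, mul_smul, hx, smul_zero]

theorem span_toAddSubgroup_eq_closure (hK : ∀ x : G, (p ^ K : ℕ) • x = 0) (s : Set G) :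
    (Submodule.span ℤ_[p] s).toAddSubgroup = AddSubgroup.closure s := by
  refine le_antisymm (fun x hx => ?_) (AddSubgroup.closure_le _ |>.2 Submodule.subset_span)
  induction hx using Submodule.span_induction with
  | mem x hx => exact AddSubgroup.subset_closure hx
  | zero => exact zero_mem _
  | add x y _ _ hx hy => exact add_mem hx hy
  | smul a x _ hx => exact smul_eq_nsmul_toZModPow_val hK a x ▸ AddSubgroup.nsmul_mem _ hx _

theorem isLocallyConstant_smulVecLinearMap (hK : ∀ x : G, (p ^ K : ℕ) • x = 0)
    {m ι : Type*} [Finite m] [Fintype ι] (g : ι → G) :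
    IsLocallyConstant (Matrix.smulVecLinearMap (R := ℤ_[p]) (m := m) g) := by
  have hfactor : ⇑(Matrix.smulVecLinearMap (R := ℤ_[p]) (m := m) g) =
      (fun c : m → ι → ZMod (p ^ K) => fun i => ∑ j, (c i j).val • g j) ∘
        fun B i j => toZModPow K (B i j) := by
    funext B i
    simp [Matrix.smulVecLinearMap_apply, smul_eq_nsmul_toZModPow_val hK]
  rw [hfactor]
  exact (IsLocallyConstant.of_discrete _).comp_continuous
    (continuous_pi fun i => continuous_pi fun j =>
      (continuous_toZModPow K).comp ((continuous_apply j).comp (continuous_apply i)))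

theorem card_map_bandMatrices (hK : ∀ x : G, (p ^ K : ℕ) • x = 0) {n : ℕ} (w : ℕ)
    (g : Fin n → G) :
    Nat.card ((bandMatrices ℤ_[p] n w).toAddSubgroup.map
        (Matrix.smulVecLinearMap (R := ℤ_[p]) (m := Fin n) g :
          Matrix (Fin n) (Fin n) ℤ_[p] →+ (Fin n → G)))
      = ∏ k : Fin n,
          Nat.card (AddSubgroup.closure (g '' {j : Fin n | |(j : ℤ) - (k : ℤ)| ≤ (w : ℤ)})) := by
  have hmap : (bandMatrices ℤ_[p] n w).map (Matrix.smulVecLinearMap g) =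
      Submodule.pi Set.univ fun k : Fin n => (Submodule.pi {j : Fin n | |(j : ℤ) - (k : ℤ)| ≤ w}ᶜ
        fun _ => ⊥).map (Fintype.linearCombination ℤ_[p] g) :=
    Submodule.map_compLeft_pi _ _
  change Nat.card ((bandMatrices ℤ_[p] n w).map (Matrix.smulVecLinearMap g)) = _
  rw [hmap, Submodule.card_pi_univ]
  refine Finset.prod_congr rfl fun k _ => ?_
  rw [Submodule.map_linearCombination_pi_compl_bot, ← span_toAddSubgroup_eq_closure hK]
  rfl

end PadicInt

theorem stmt2_general (p : ℕ) [Fact p.Prime] (n w : ℕ)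
    (G : Type*) [AddCommGroup G] [Module ℤ_[p] G] [Fintype G]
    (hG : ∀ g : G, ∃ k : ℕ, (p ^ k : ℕ) • g = 0)
    [MeasurableSpace (Matrix (Fin n) (Fin n) ℤ_[p])]
    [BorelSpace (Matrix (Fin n) (Fin n) ℤ_[p])]
    (μ : Measure (Matrix (Fin n) (Fin n) ℤ_[p])) [IsProbabilityMeasure μ]
    (hsupp : μ {B | ¬ ∀ i j : Fin n, (w : ℤ) < |(i : ℤ) - (j : ℤ)| → B i j = 0} = 0)
    (hinv : ∀ C : Matrix (Fin n) (Fin n) ℤ_[p],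
      (∀ i j : Fin n, (w : ℤ) < |(i : ℤ) - (j : ℤ)| → C i j = 0) →
      μ.map (fun B => B + C) = μ)
    (g : Fin n → G) :
    μ {B | ∀ i : Fin n, ∑ j : Fin n, B i j • g j = 0}
      = ∏ k : Fin n,
          (Nat.card (AddSubgroup.closure
            (g '' {j : Fin n | |(j : ℤ) - (k : ℤ)| ≤ (w : ℤ)})) : ℝ≥0∞)⁻¹ := by
  obtain ⟨K, hK⟩ := exists_forall_pow_nsmul_eq_zero_of_finite hG
  let φ : Matrix (Fin n) (Fin n) ℤ_[p] →+ (Fin n → G) :=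
    Matrix.smulVecLinearMap (R := ℤ_[p]) (m := Fin n) g
  have hker : {B : Matrix (Fin n) (Fin n) ℤ_[p] | ∀ i, ∑ j, B i j • g j = 0} = φ.ker := by
    ext B
    simp [φ, funext_iff, Matrix.smulVecLinearMap_apply]
  have hband : (bandMatrices ℤ_[p] n w : Set (Matrix (Fin n) (Fin n) ℤ_[p]))ᶜ =
      {B | ¬ ∀ i j : Fin n, (w : ℤ) < |(i : ℤ) - (j : ℤ)| → B i j = 0} := by
    ext B
    simp only [Set.mem_compl_iff, SetLike.mem_coe, mem_bandMatrices, Set.mem_ofPred_eq]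
  have hfiber : ∀ a, MeasurableSet (φ ⁻¹' {a}) := fun a =>
    ((PadicInt.isLocallyConstant_smulVecLinearMap hK g).isOpen_fiber a).measurableSet
  rw [hker, measure_ker_eq_inv_card_map (S := (bandMatrices ℤ_[p] n w).toAddSubgroup)
      (hband ▸ hsupp) (fun C hC => hinv C (mem_bandMatrices.1 hC)) hfiber,
    PadicInt.card_map_bandMatrices hK, Nat.cast_prod,
    ENNReal.prod_inv_distrib fun _ _ _ _ _ => Or.inr (ENNReal.natCast_ne_top _)]

/-- Let `B` be a Haar-uniform random `n × n` band matrix over `ℤ_[p]` with band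
width `w` (formalized as: `μ` is a Borel probability measure on matrices, supported on the
compact additive group of band matrices, and invariant under translation by band matrices —
this uniquely characterizes the Haar probability measure).  For a fixed `g ∈ G^n` (extended
by zero outside `[1,n]`) and `H_g(k) = ⟨g j : k - w ≤ j ≤ k + w⟩`, we have
`P(B g = 0) = ∏_{k=1}^n |H_g(k)|⁻¹`. -/
theorem stmt2 (p : ℕ) [Fact p.Prime] (n w : ℕ) (hn : 0 < n) (hw : 0 < w)
    (G : Type*) [AddCommGroup G] [Module ℤ_[p] G] [Fintype G]
    (hG : ∀ g : G, ∃ k : ℕ, (p ^ k : ℕ) • g = 0)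
    [MeasurableSpace (Matrix (Fin n) (Fin n) ℤ_[p])]
    [BorelSpace (Matrix (Fin n) (Fin n) ℤ_[p])]
    (μ : Measure (Matrix (Fin n) (Fin n) ℤ_[p])) [IsProbabilityMeasure μ]
    (hsupp : μ {B | ¬ ∀ i j : Fin n, (w : ℤ) < |(i : ℤ) - (j : ℤ)| → B i j = 0} = 0)
    (hinv : ∀ C : Matrix (Fin n) (Fin n) ℤ_[p],
      (∀ i j : Fin n, (w : ℤ) < |(i : ℤ) - (j : ℤ)| → C i j = 0) →
      μ.map (fun B => B + C) = μ)
    (g : Fin n → G) :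
    μ {B | ∀ i : Fin n, ∑ j : Fin n, B i j • g j = 0}
      = ∏ k : Fin n,
          (Nat.card (AddSubgroup.closure
            (g '' {j : Fin n | |(j : ℤ) - (k : ℤ)| ≤ (w : ℤ)})) : ℝ≥0∞)⁻¹ :=
  stmt2_general p n w G hG μ hsupp hinv g
end

section
/- Let G be a finite abelian p-group, n a positive integer, and w_n a positive integer. Then ∑_{g : [1,n] → G, ⟨g⟩ = G} ∏_{k=1}^n |H_g(k)|^{-1} ≥ 1 - |Sg(G)| p^{-n}, where H_g(k) = ⟨g(j) : max(1,k-w_n) ≤ j ≤ min(n,k+w_n)⟩ and Sg(G) is the set of subgroups of G. -/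
/-!
Every term of the sum is at least `|G|^{-n}`, because each `H_g(k)` has order at most `|G|`.
A tuple that does not generate `G` lies in some proper subgroup, of order at most `|G|/p`
since `G` is a `p`-group, so at most `|Sg(G)| (|G|/p)^n` of the `|G|^n` tuples fail to
generate, and the generating tuples alone contribute at least `1 - |Sg(G)| p^{-n}`.
-/

open scoped Classical

open Finset

theorem AddGroup.exists_card_eq_prime_pow {p : ℕ} [Fact p.Prime] {G : Type*} [AddGroup G]
    [Finite G] (hG : ∀ g : G, ∃ k : ℕ, (p ^ k : ℕ) • g = 0) :
    ∃ m : ℕ, Nat.card G = p ^ m := by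
  have hpG : IsPGroup p (Multiplicative G) := fun g ↦ (hG g.toAdd).imp fun k hk ↦ by
    rw [← ofAdd_toAdd g, ← ofAdd_nsmul, hk, ofAdd_zero]
  simpa only [Nat.card_congr Multiplicative.toAdd] using IsPGroup.iff_card.mp hpG

namespace AddSubgroup

variable {G : Type*} [AddGroup G]

theorem prime_mul_card_le_of_ne_top {p : ℕ} [Fact p.Prime] [Finite G]
    (hG : ∀ g : G, ∃ k : ℕ, (p ^ k : ℕ) • g = 0) {H : AddSubgroup G} (hH : H ≠ ⊤) :
    p * Nat.card H ≤ Nat.card G := by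
  obtain ⟨m, hm⟩ := AddGroup.exists_card_eq_prime_pow hG
  obtain ⟨k, -, hk⟩ := (Nat.dvd_prime_pow Fact.out).mp (hm ▸ H.index_dvd_card)
  have hk0 : k ≠ 0 := by
    rintro rfl
    exact hH (H.index_eq_one.mp (by simpa using hk))
  calc p * Nat.card H ≤ H.index * Nat.card H := by
        rw [hk]; gcongr; exact Nat.le_self_pow hk0 p
    _ = Nat.card G := by rw [mul_comm, H.card_mul_index]

theorem inv_card_pow_le_prod_inv_card [Finite G] {ι : Type*} [Fintype ι]
    (H : ι → AddSubgroup G) :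
    ((Nat.card G : ℝ) ^ Fintype.card ι)⁻¹ ≤ ∏ i, (Nat.card (H i) : ℝ)⁻¹ := by
  rw [← inv_pow, ← Finset.card_univ, ← prod_const]
  gcongr with i
  · exact Nat.cast_pos.mpr Nat.card_pos
  · exact_mod_cast (H i).card_le_card_addGroup

variable [Fintype G]

theorem card_pi_mem {ι : Type*} [Fintype ι] [DecidableEq ι] (H : AddSubgroup G) :
    #{g : ι → G | ∀ i, g i ∈ H} = Nat.card H ^ Fintype.card ι := by
  rw [← Fintype.card_subtype,
    Fintype.card_congr (Equiv.subtypePiEquivPi (p := fun _ b ↦ b ∈ H))]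
  simp [Nat.card_eq_fintype_card]

theorem card_closure_range_ne_top_le_sum {ι : Type*} [Fintype ι] [DecidableEq ι] :
    #{g : ι → G | closure (Set.range g) ≠ ⊤}
      ≤ ∑ H : AddSubgroup G with H ≠ ⊤, Nat.card H ^ Fintype.card ι := by
  calc _ ≤ #(({H : AddSubgroup G | H ≠ ⊤} : Finset _).biUnion
          fun H ↦ {g : ι → G | ∀ i, g i ∈ H}) := by
        refine card_le_card fun g hg ↦ mem_biUnion.mpr ⟨_, by simpa using hg, ?_⟩
        simpa using fun i ↦ subset_closure (Set.mem_range_self i)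
    _ ≤ _ := card_biUnion_le.trans_eq (sum_congr rfl fun H _ ↦ card_pi_mem H)

theorem one_sub_mul_zpow_le_card_closure_range_eq_top_div {p : ℕ} [Fact p.Prime]
    (hG : ∀ g : G, ∃ k : ℕ, (p ^ k : ℕ) • g = 0) (n : ℕ) :
    1 - (Nat.card (AddSubgroup G) : ℝ) * (p : ℝ) ^ (-(n : ℤ))
      ≤ #{g : Fin n → G | closure (Set.range g) = ⊤} / (Nat.card G : ℝ) ^ n := by
  have hproper (H : AddSubgroup G) (hH : H ≠ ⊤) : (Nat.card H : ℝ) ≤ Nat.card G / p := by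
    rw [le_div_iff₀ (Nat.cast_pos.mpr (Fact.out : p.Prime).pos), mul_comm]
    exact_mod_cast H.prime_mul_card_le_of_ne_top hG hH
  have hbad : (#{g : Fin n → G | closure (Set.range g) ≠ ⊤} : ℝ)
      ≤ Nat.card (AddSubgroup G) * (Nat.card G / p) ^ n := by
    have hsum := card_closure_range_ne_top_le_sum (G := G) (ι := Fin n)
    rw [Fintype.card_fin] at hsum
    calc _ ≤ ∑ H : AddSubgroup G with H ≠ ⊤, (Nat.card H : ℝ) ^ n := by
          exact_mod_cast hsum
      _ ≤ ∑ H : AddSubgroup G with H ≠ ⊤, ((Nat.card G : ℝ) / p) ^ n :=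
          sum_le_sum fun H hH ↦
            pow_le_pow_left₀ (Nat.cast_nonneg _) (hproper H (by simpa using hH)) n
      _ ≤ _ := by
          rw [sum_const, nsmul_eq_mul]
          gcongr
          exact_mod_cast (card_filter_le _ _).trans_eq
            (Nat.card_eq_fintype_card (α := AddSubgroup G)).symm
  have htotal : (#{g : Fin n → G | closure (Set.range g) = ⊤} : ℝ)
      + #{g : Fin n → G | closure (Set.range g) ≠ ⊤} = (Nat.card G : ℝ) ^ n := by
    rw [← Nat.cast_add, card_filter_add_card_filter_not, card_univ, Fintype.card_pi]
    simp [Nat.card_eq_fintype_card]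
  rw [le_div_iff₀ (pow_pos (Nat.cast_pos.mpr Nat.card_pos) n), sub_mul, one_mul, zpow_neg,
    zpow_natCast]
  calc _ = (Nat.card G : ℝ) ^ n - Nat.card (AddSubgroup G) * (Nat.card G / p) ^ n := by
        rw [div_pow]; field_simp
    _ ≤ _ := by linarith

end AddSubgroup

theorem stmt7_general (p : ℕ) [Fact p.Prime] (n wn : ℕ)
    (G : Type*) [AddCommGroup G] [Fintype G]
    (hG : ∀ g : G, ∃ k : ℕ, (p ^ k : ℕ) • g = 0) :
    1 - (Nat.card (AddSubgroup G) : ℝ) * (p : ℝ) ^ (-(n : ℤ))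
      ≤ ∑ g : Fin n → G,
          if AddSubgroup.closure (Set.range g) = ⊤ then
            ∏ k : Fin n,
              ((Nat.card (AddSubgroup.closure
                (g '' {j : Fin n | |(j : ℤ) - (k : ℤ)| ≤ (wn : ℤ)})) : ℝ))⁻¹
          else 0 := by
  calc _ ≤ #{g : Fin n → G | AddSubgroup.closure (Set.range g) = ⊤}
          / (Nat.card G : ℝ) ^ n :=
        AddSubgroup.one_sub_mul_zpow_le_card_closure_range_eq_top_div hG n
    _ = ∑ g : Fin n → G,
          if AddSubgroup.closure (Set.range g) = ⊤ then ((Nat.card G : ℝ) ^ n)⁻¹ else 0 := by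
        rw [sum_ite, sum_const_zero, add_zero, sum_const, nsmul_eq_mul, div_eq_mul_inv]
    _ ≤ _ := sum_le_sum fun g _ ↦ by
        split_ifs
        · simpa using AddSubgroup.inv_card_pow_le_prod_inv_card (G := G) fun k : Fin n ↦
            AddSubgroup.closure (g '' {j : Fin n | |(j : ℤ) - (k : ℤ)| ≤ (wn : ℤ)})
        · rfl

/-- For a finite abelian `p`-group `G` and positive integers `n, wₙ`,
`∑_{g : [1,n] → G, ⟨g⟩ = G} ∏_{k=1}^n |H_g(k)|⁻¹ ≥ 1 - |Sg(G)| p^{-n}`, where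
`H_g(k) = ⟨g j : max(1, k - wₙ) ≤ j ≤ min(n, k + wₙ)⟩` and `Sg(G)` is the set of
subgroups of `G`. -/
theorem stmt7 (p : ℕ) [Fact p.Prime] (n wn : ℕ) (hn : 0 < n) (hw : 0 < wn)
    (G : Type*) [AddCommGroup G] [Fintype G]
    (hG : ∀ g : G, ∃ k : ℕ, (p ^ k : ℕ) • g = 0) :
    1 - (Nat.card (AddSubgroup G) : ℝ) * (p : ℝ) ^ (-(n : ℤ))
      ≤ ∑ g : Fin n → G,
          if AddSubgroup.closure (Set.range g) = ⊤ then
            ∏ k : Fin n,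
              ((Nat.card (AddSubgroup.closure
                (g '' {j : Fin n | |(j : ℤ) - (k : ℤ)| ≤ (wn : ℤ)})) : ℝ))⁻¹
          else 0 :=
  stmt7_general p n wn G hG
end

section
/- Let B be a Haar-uniform n×n band matrix over F_p with band width w. Fix an interval [c, c+n_1-1] ⊆ [1,n] with n_1 ≥ 2 and let Y = |{v ∈ F_p^n : v ≠ 0, supp(v) ⊆ [c, c+n_1-1], Bv = 0}|. Then E[Y] ≥ binom(n_1, 2) · p^{-2w-2} ≥ n_1^2 p^{-2w} / (4 p^2). -/
open scoped Classical

open Finset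

/-- Kernel-count lemma: for a fixed vector supported in `[a,b]`, the number of band matrices
killing it is at least `N / p^(b-a+1+2w)`. -/
private lemma bandKernelCount (p : ℕ) [Fact p.Prime] (n w : ℕ) (a b : ℕ) (hab : a ≤ b)
    (v : Fin n → ZMod p)
    (hsupp : ∀ j : Fin n, v j ≠ 0 → a ≤ (j : ℕ) ∧ (j : ℕ) ≤ b) :
    (Finset.univ.filter (fun B : Matrix (Fin n) (Fin n) (ZMod p) =>
        ∀ i j : Fin n, (w : ℤ) < |(i : ℤ) - (j : ℤ)| → B i j = 0)).card
      ≤ (Finset.univ.filter (fun B : Matrix (Fin n) (Fin n) (ZMod p) =>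
          (∀ i j : Fin n, (w : ℤ) < |(i : ℤ) - (j : ℤ)| → B i j = 0) ∧ B.mulVec v = 0)).card
        * p ^ (b - a + 1 + 2 * w) := by
  classical
  have hp : p.Prime := Fact.out
  set Bnd : AddSubgroup (Matrix (Fin n) (Fin n) (ZMod p)) :=
    { carrier := {B | ∀ i j : Fin n, (w : ℤ) < |(i : ℤ) - (j : ℤ)| → B i j = 0}
      zero_mem' := by intro i j _; rfl
      add_mem' := by
        intro A B hA hB i j h
        simp only [Matrix.add_apply, hA i j h, hB i j h, add_zero]
      neg_mem' := by
        intro A hA i j h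
        simp only [Matrix.neg_apply, hA i j h, neg_zero] } with hBnd
  have memBnd : ∀ B : Matrix (Fin n) (Fin n) (ZMod p),
      B ∈ Bnd ↔ ∀ i j : Fin n, (w : ℤ) < |(i : ℤ) - (j : ℤ)| → B i j = 0 := fun _ => Iff.rfl
  set φ : Bnd →+ (Fin n → ZMod p) :=
    { toFun := fun B => (B : Matrix (Fin n) (Fin n) (ZMod p)).mulVec v
      map_zero' := by simp [Matrix.zero_mulVec]
      map_add' := by intro A B; simp [Matrix.add_mulVec] } with hφ
  -- total card
  have hM : Nat.card Bnd = (Finset.univ.filter (fun B : Matrix (Fin n) (Fin n) (ZMod p) =>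
      ∀ i j : Fin n, (w : ℤ) < |(i : ℤ) - (j : ℤ)| → B i j = 0)).card := by
    rw [Nat.card_eq_fintype_card, Fintype.card_subtype]
    exact congrArg Finset.card (Finset.filter_congr fun B _ => Iff.rfl)
  -- kernel card
  have hker : Nat.card φ.ker = (Finset.univ.filter (fun B : Matrix (Fin n) (Fin n) (ZMod p) =>
      (∀ i j : Fin n, (w : ℤ) < |(i : ℤ) - (j : ℤ)| → B i j = 0) ∧ B.mulVec v = 0)).card := by
    have e : φ.ker ≃ {B : Matrix (Fin n) (Fin n) (ZMod p) //
        (∀ i j : Fin n, (w : ℤ) < |(i : ℤ) - (j : ℤ)| → B i j = 0) ∧ B.mulVec v = 0} :=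
      { toFun := fun x => ⟨x.1.1, x.1.2, x.2⟩
        invFun := fun B => ⟨⟨B.1, B.2.1⟩, B.2.2⟩
        left_inv := fun x => rfl
        right_inv := fun B => rfl }
    rw [Nat.card_congr e, Nat.card_eq_fintype_card, Fintype.card_subtype]
  -- range vanishes off S
  set S : Finset (Fin n) :=
    Finset.univ.filter (fun i : Fin n => (a : ℤ) - w ≤ (i : ℤ) ∧ (i : ℤ) ≤ (b : ℤ) + w) with hS
  have hvanish : ∀ u ∈ φ.range, ∀ i : Fin n, i ∉ S → u i = 0 := by
    rintro u ⟨B, rfl⟩ i hi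
    have hi' : ¬ ((a : ℤ) - w ≤ (i : ℤ) ∧ (i : ℤ) ≤ (b : ℤ) + w) := by
      simpa [hS] using hi
    show (B : Matrix (Fin n) (Fin n) (ZMod p)).mulVec v i = 0
    rw [Matrix.mulVec, dotProduct]
    apply Finset.sum_eq_zero
    intro j _
    by_cases hv : v j = 0
    · simp [hv]
    · obtain ⟨h1, h2⟩ := hsupp j hv
      have : (w : ℤ) < |(i : ℤ) - (j : ℤ)| := by
        rw [lt_abs]
        have c1 : (a : ℤ) ≤ (j : ℤ) := by exact_mod_cast h1
        have c2 : (j : ℤ) ≤ (b : ℤ) := by exact_mod_cast h2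
        clear_value Bnd φ S
        clear * - c1 c2 hi'
        omega
      rw [B.2 i j this, zero_mul]
  -- card of S
  have hScard : S.card ≤ b - a + 1 + 2 * w := by
    have h1 : S.card ≤ (Finset.Icc ((a : ℤ) - w) ((b : ℤ) + w)).card := by
      refine Finset.card_le_card_of_injOn (fun i : Fin n => ((i : ℕ) : ℤ)) ?_ ?_
      · intro i hi
        simp only [hS, Finset.mem_filter, Finset.mem_univ, true_and] at hi
        simp only [Finset.mem_Icc]
        simpa using hi
      · intro i _ j _ h
        have h' : ((i : ℕ) : ℤ) = ((j : ℕ) : ℤ) := h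
        exact Fin.ext (by exact_mod_cast h')
    rw [Int.card_Icc] at h1
    clear_value Bnd φ S
    clear * - h1 hab
    omega
  -- range card
  have hrange : Nat.card φ.range ≤ p ^ (b - a + 1 + 2 * w) := by
    have hinj : Function.Injective
        (fun (u : φ.range) (i : {i : Fin n // i ∈ S}) => (u : Fin n → ZMod p) i.1) := by
      intro u₁ u₂ h
      apply Subtype.ext
      funext i
      by_cases hi : i ∈ S
      · exact congrFun h ⟨i, hi⟩
      · rw [hvanish u₁.1 u₁.2 i hi, hvanish u₂.1 u₂.2 i hi]
    calc Nat.card φ.range ≤ Nat.card ({i : Fin n // i ∈ S} → ZMod p) :=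
          Nat.card_le_card_of_injective _ hinj
      _ = p ^ S.card := by
          rw [Nat.card_eq_fintype_card, Fintype.card_fun, ZMod.card, Fintype.card_coe]
      _ ≤ p ^ (b - a + 1 + 2 * w) :=
          Nat.pow_le_pow_right hp.pos hScard
  -- first isomorphism theorem
  have hiso : Nat.card Bnd = Nat.card φ.range * Nat.card φ.ker := by
    rw [AddSubgroup.card_eq_card_quotient_mul_card_addSubgroup φ.ker]
    congr 1
    exact Nat.card_congr (QuotientAddGroup.quotientKerEquivRange φ).toEquiv
  calc (Finset.univ.filter (fun B : Matrix (Fin n) (Fin n) (ZMod p) =>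
        ∀ i j : Fin n, (w : ℤ) < |(i : ℤ) - (j : ℤ)| → B i j = 0)).card
      = Nat.card φ.range * Nat.card φ.ker := by rw [← hM, hiso]
    _ ≤ p ^ (b - a + 1 + 2 * w) * Nat.card φ.ker :=
        Nat.mul_le_mul_right _ hrange
    _ = (Finset.univ.filter (fun B : Matrix (Fin n) (Fin n) (ZMod p) =>
          (∀ i j : Fin n, (w : ℤ) < |(i : ℤ) - (j : ℤ)| → B i j = 0) ∧ B.mulVec v = 0)).card
        * p ^ (b - a + 1 + 2 * w) := by rw [hker, Nat.mul_comm]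

private lemma vecCount (p : ℕ) [Fact p.Prime] (n : ℕ) (a b : ℕ) (hab : a < b) (hbn : b < n) :
    p ^ (b - a - 1) ≤ (Finset.univ.filter (fun v : Fin n → ZMod p =>
      (∀ j : Fin n, v j ≠ 0 → a ≤ (j : ℕ) ∧ (j : ℕ) ≤ b) ∧
      (∃ j : Fin n, (j : ℕ) = a ∧ v j ≠ 0) ∧ (∃ j : Fin n, (j : ℕ) = b ∧ v j ≠ 0))).card := by
  classical
  have han : a < n := lt_trans hab hbn
  set x : Fin n := ⟨a, han⟩ with hx
  set y : Fin n := ⟨b, hbn⟩ with hy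
  have hxy : x ≠ y := by
    intro h
    exact absurd (congrArg Fin.val h) (by simp [hx, hy]; omega)
  set F : ({j : Fin n // j ∈ Finset.Ioo x y} → ZMod p) → (Fin n → ZMod p) := fun f j =>
    if j = x then 1 else if j = y then 1 else
      if h : j ∈ Finset.Ioo x y then f ⟨j, h⟩ else 0 with hF
  have hFx : ∀ f, F f x = 1 := by intro f; simp [hF]
  have hFy : ∀ f, F f y = 1 := by
    intro f
    simp [hF, Ne.symm hxy]
  have hmem : ∀ f, F f ∈ (Finset.univ.filter (fun v : Fin n → ZMod p =>
      (∀ j : Fin n, v j ≠ 0 → a ≤ (j : ℕ) ∧ (j : ℕ) ≤ b) ∧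
      (∃ j : Fin n, (j : ℕ) = a ∧ v j ≠ 0) ∧ (∃ j : Fin n, (j : ℕ) = b ∧ v j ≠ 0))) := by
    intro f
    rw [Finset.mem_filter]
    refine ⟨Finset.mem_univ _, ?_, ⟨x, rfl, by rw [hFx]; exact one_ne_zero⟩,
      ⟨y, rfl, by rw [hFy]; exact one_ne_zero⟩⟩
    intro j hj
    by_cases h1 : j = x
    · subst h1; constructor <;> simp [hx] <;> omega
    · by_cases h2 : j = y
      · subst h2; constructor <;> simp [hy] <;> omega
      · by_cases h3 : j ∈ Finset.Ioo x y
        · rw [Finset.mem_Ioo] at h3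
          obtain ⟨hl, hr⟩ := h3
          rw [Fin.lt_def] at hl hr
          constructor
          · exact le_of_lt (by simpa [hx] using hl)
          · exact le_of_lt (by simpa [hy] using hr)
        · exfalso
          apply hj
          simp only [hF]
          rw [if_neg h1, if_neg h2, dif_neg h3]
  have hinj : Set.InjOn F (Finset.univ : Finset ({j : Fin n // j ∈ Finset.Ioo x y} → ZMod p)) := by
    intro f₁ _ f₂ _ h
    funext j
    have hj := j.2
    rw [Finset.mem_Ioo] at hj
    have h1 : (j : Fin n) ≠ x := ne_of_gt hj.1
    have h2 : (j : Fin n) ≠ y := ne_of_lt hj.2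
    have := congrFun h (j : Fin n)
    simp only [hF] at this
    rw [if_neg h1, if_neg h2, dif_pos j.2, if_neg h1, if_neg h2, dif_pos j.2] at this
    simpa using this
  calc p ^ (b - a - 1)
      = (Finset.univ : Finset ({j : Fin n // j ∈ Finset.Ioo x y} → ZMod p)).card := by
        rw [Finset.card_univ, Fintype.card_fun, ZMod.card, Fintype.card_coe, Fin.card_Ioo]
    _ ≤ _ := Finset.card_le_card_of_injOn F (fun f _ => hmem f) hinj

private lemma pairsCard (n₁ : ℕ) :
    ((Finset.range n₁ ×ˢ Finset.range n₁).filter (fun q => q.1 < q.2)).card = n₁.choose 2 := by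
  classical
  have h : (Finset.range n₁ ×ˢ Finset.range n₁).filter (fun q => q.1 < q.2)
      = (Finset.range n₁).biUnion (fun b => (Finset.range b).image (fun a => (a, b))) := by
    ext q
    simp only [Finset.mem_filter, Finset.mem_product, Finset.mem_range, Finset.mem_biUnion,
      Finset.mem_image]
    constructor
    · rintro ⟨⟨_, h2⟩, h3⟩
      exact ⟨q.2, h2, q.1, h3, rfl⟩
    · rintro ⟨b, hb, a, ha, rfl⟩
      exact ⟨⟨lt_trans ha hb, hb⟩, ha⟩
  rw [h, Finset.card_biUnion]
  · have hc : ∀ b ∈ Finset.range n₁, ((Finset.range b).image (fun a => (a, b))).card = b := by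
      intro b _
      rw [Finset.card_image_of_injective _ (fun a a' hh => congrArg Prod.fst hh),
        Finset.card_range]
    rw [Finset.sum_congr rfl hc]
    have h2 := Finset.sum_range_id_mul_two n₁
    rw [Nat.choose_two_right]
    omega
  · intro b _ b' _ hbb'
    rw [Function.onFun, Finset.disjoint_left]
    rintro q hq hq'
    simp only [Finset.mem_image, Finset.mem_range] at hq hq'
    obtain ⟨a1, _, rfl⟩ := hq
    obtain ⟨a2, _, heq⟩ := hq'
    exact hbb' (congrArg Prod.snd heq).symm

private lemma perPair (p : ℕ) [Fact p.Prime] (n w : ℕ) (a b : ℕ) (hab : a < b) (hbn : b < n) :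
    (((Finset.univ.filter (fun B : Matrix (Fin n) (Fin n) (ZMod p) =>
        ∀ i j : Fin n, (w : ℤ) < |(i : ℤ) - (j : ℤ)| → B i j = 0)).card : ℝ))
        * (p : ℝ) ^ (-(2 * (w : ℤ) + 2))
      ≤ ∑ v ∈ Finset.univ.filter (fun v : Fin n → ZMod p =>
          (∀ j : Fin n, v j ≠ 0 → a ≤ (j : ℕ) ∧ (j : ℕ) ≤ b) ∧
          (∃ j : Fin n, (j : ℕ) = a ∧ v j ≠ 0) ∧ (∃ j : Fin n, (j : ℕ) = b ∧ v j ≠ 0)),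
          (((Finset.univ.filter (fun B : Matrix (Fin n) (Fin n) (ZMod p) =>
            ∀ i j : Fin n, (w : ℤ) < |(i : ℤ) - (j : ℤ)| → B i j = 0)).filter
              (fun B => B.mulVec v = 0)).card : ℝ) := by
  classical
  have hp : p.Prime := Fact.out
  have hp0 : (0 : ℝ) < (p : ℝ) := by exact_mod_cast hp.pos
  have hpne : (p : ℝ) ≠ 0 := ne_of_gt hp0
  set N := (Finset.univ.filter (fun B : Matrix (Fin n) (Fin n) (ZMod p) =>
      ∀ i j : Fin n, (w : ℤ) < |(i : ℤ) - (j : ℤ)| → B i j = 0)).card with hN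
  set m := b - a + 1 + 2 * w with hm
  have hpm : (0 : ℝ) < (p : ℝ) ^ m := pow_pos hp0 _
  have key : ∀ v ∈ Finset.univ.filter (fun v : Fin n → ZMod p =>
      (∀ j : Fin n, v j ≠ 0 → a ≤ (j : ℕ) ∧ (j : ℕ) ≤ b) ∧
      (∃ j : Fin n, (j : ℕ) = a ∧ v j ≠ 0) ∧ (∃ j : Fin n, (j : ℕ) = b ∧ v j ≠ 0)),
      (N : ℝ) / (p : ℝ) ^ m
        ≤ (((Finset.univ.filter (fun B : Matrix (Fin n) (Fin n) (ZMod p) =>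
            ∀ i j : Fin n, (w : ℤ) < |(i : ℤ) - (j : ℤ)| → B i j = 0)).filter
              (fun B => B.mulVec v = 0)).card : ℝ) := by
    intro v hv
    rw [Finset.mem_filter] at hv
    have h := bandKernelCount p n w a b hab.le v hv.2.1
    rw [Finset.filter_filter]
    rw [div_le_iff₀ hpm, hN, hm]
    exact_mod_cast h
  have hcount := vecCount p n a b hab hbn
  calc (N : ℝ) * (p : ℝ) ^ (-(2 * (w : ℤ) + 2))
      = ((p : ℝ) ^ (b - a - 1)) * ((N : ℝ) / (p : ℝ) ^ m) := by
        rw [div_eq_mul_inv, ← zpow_natCast (p : ℝ) (b - a - 1), ← zpow_natCast (p : ℝ) m,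
          ← zpow_neg]
        rw [mul_comm ((p:ℝ) ^ ((b - a - 1 : ℕ) : ℤ)) _, mul_assoc, ← zpow_add₀ hpne]
        congr 1
        congr 1
        clear_value N m
        clear * - hm hab
        omega
    _ ≤ (((Finset.univ.filter (fun v : Fin n → ZMod p =>
          (∀ j : Fin n, v j ≠ 0 → a ≤ (j : ℕ) ∧ (j : ℕ) ≤ b) ∧
          (∃ j : Fin n, (j : ℕ) = a ∧ v j ≠ 0) ∧
          (∃ j : Fin n, (j : ℕ) = b ∧ v j ≠ 0))).card : ℝ)) * ((N : ℝ) / (p : ℝ) ^ m) := by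
        apply mul_le_mul_of_nonneg_right _ (by positivity)
        exact_mod_cast hcount
    _ ≤ _ := by
        have := Finset.card_nsmul_le_sum (Finset.univ.filter (fun v : Fin n → ZMod p =>
          (∀ j : Fin n, v j ≠ 0 → a ≤ (j : ℕ) ∧ (j : ℕ) ≤ b) ∧
          (∃ j : Fin n, (j : ℕ) = a ∧ v j ≠ 0) ∧
          (∃ j : Fin n, (j : ℕ) = b ∧ v j ≠ 0))) _ ((N : ℝ) / (p : ℝ) ^ m) key
        simpa [nsmul_eq_mul] using this

/-- For a Haar-uniform `n × n` band matrix `B` over `F_p` with band width `w`,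
and an interval `[c, c+n₁-1] ⊆ [1,n]` (`0`-indexed here: `c + n₁ ≤ n`) with `n₁ ≥ 2`, the
expected number `E[Y]` of nonzero kernel vectors supported in the interval satisfies
`E[Y] ≥ C(n₁,2) p^{-2w-2} ≥ n₁² p^{-2w} / (4p²)`. -/
theorem stmt12 (p : ℕ) [Fact p.Prime] (n w : ℕ) (hw : 0 < w)
    (c n₁ : ℕ) (hn₁ : 2 ≤ n₁) (hcn : c + n₁ ≤ n) :
    ((n₁.choose 2 : ℝ) * (p : ℝ) ^ (-(2 * (w : ℤ) + 2))
        ≤ (∑ B ∈ Finset.univ.filter (fun B : Matrix (Fin n) (Fin n) (ZMod p) =>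
              ∀ i j : Fin n, (w : ℤ) < |(i : ℤ) - (j : ℤ)| → B i j = 0),
            (Nat.card {v : Fin n → ZMod p // v ≠ 0 ∧
                (∀ i : Fin n, v i ≠ 0 → c ≤ (i : ℕ) ∧ (i : ℕ) ≤ c + n₁ - 1) ∧
                B.mulVec v = 0} : ℝ))
          / ((Finset.univ.filter (fun B : Matrix (Fin n) (Fin n) (ZMod p) =>
              ∀ i j : Fin n, (w : ℤ) < |(i : ℤ) - (j : ℤ)| → B i j = 0)).card : ℝ)) ∧
    ((n₁ : ℝ) ^ 2 * (p : ℝ) ^ (-(2 * (w : ℤ))) / (4 * (p : ℝ) ^ 2)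
        ≤ (n₁.choose 2 : ℝ) * (p : ℝ) ^ (-(2 * (w : ℤ) + 2))) := by
  classical
  have hp : p.Prime := Fact.out
  have hp0 : (0 : ℝ) < (p : ℝ) := by exact_mod_cast hp.pos
  have hpne : (p : ℝ) ≠ 0 := ne_of_gt hp0
  constructor
  · -- main inequality
    have hNpos : 0 < (Finset.univ.filter (fun B : Matrix (Fin n) (Fin n) (ZMod p) =>
        ∀ i j : Fin n, (w : ℤ) < |(i : ℤ) - (j : ℤ)| → B i j = 0)).card :=
      Finset.card_pos.mpr ⟨0, by simp⟩
    have hNR : (0 : ℝ) < ((Finset.univ.filter (fun B : Matrix (Fin n) (Fin n) (ZMod p) =>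
        ∀ i j : Fin n, (w : ℤ) < |(i : ℤ) - (j : ℤ)| → B i j = 0)).card : ℝ) := by
      exact_mod_cast hNpos
    rw [le_div_iff₀ hNR]
    have hrw : ∀ B : Matrix (Fin n) (Fin n) (ZMod p),
        (Nat.card {v : Fin n → ZMod p // v ≠ 0 ∧
            (∀ i : Fin n, v i ≠ 0 → c ≤ (i : ℕ) ∧ (i : ℕ) ≤ c + n₁ - 1) ∧
            B.mulVec v = 0} : ℕ)
        = ((Finset.univ.filter (fun v : Fin n → ZMod p => v ≠ 0 ∧
            (∀ i : Fin n, v i ≠ 0 → c ≤ (i : ℕ) ∧ (i : ℕ) ≤ c + n₁ - 1) ∧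
            B.mulVec v = 0)).card) := by
      intro B
      rw [Nat.card_eq_fintype_card, Fintype.card_subtype]
    -- the pair index set and the per-pair vector sets
    set Q := (Finset.range n₁ ×ˢ Finset.range n₁).filter (fun q => q.1 < q.2) with hQ
    set V : ℕ × ℕ → Finset (Fin n → ZMod p) := fun q =>
      Finset.univ.filter (fun v : Fin n → ZMod p =>
        (∀ j : Fin n, v j ≠ 0 → c + q.1 ≤ (j : ℕ) ∧ (j : ℕ) ≤ c + q.2) ∧
        (∃ j : Fin n, (j : ℕ) = c + q.1 ∧ v j ≠ 0) ∧
        (∃ j : Fin n, (j : ℕ) = c + q.2 ∧ v j ≠ 0)) with hV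
    have hQfacts : ∀ q ∈ Q, q.1 < q.2 ∧ q.2 < n₁ := by
      intro q hq
      simp only [hQ, Finset.mem_filter, Finset.mem_product, Finset.mem_range] at hq
      exact ⟨hq.2, hq.1.2⟩
    -- disjointness of the V q
    have hdisj : ∀ q ∈ Q, ∀ q' ∈ Q, q ≠ q' → Disjoint (V q) (V q') := by
      intro q _ q' _ hne
      rw [Finset.disjoint_left]
      intro v hv hv'
      simp only [hV, Finset.mem_filter, Finset.mem_univ, true_and] at hv hv'
      obtain ⟨hs, ⟨j1, hj1, hvj1⟩, ⟨j2, hj2, hvj2⟩⟩ := hv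
      obtain ⟨hs', ⟨j1', hj1', hvj1'⟩, ⟨j2', hj2', hvj2'⟩⟩ := hv'
      apply hne
      have e1 := hs j1' hvj1'
      have e2 := hs j2' hvj2'
      have e1' := hs' j1 hvj1
      have e2' := hs' j2 hvj2
      have : q.1 = q'.1 ∧ q.2 = q'.2 := by
        rw [hj1] at e1'
        rw [hj2] at e2'
        rw [hj1'] at e1
        rw [hj2'] at e2
        clear * - e1 e2 e1' e2'
        omega
      exact Prod.ext this.1 this.2
    -- Step C+D : lower bound via pairs
    have stepD : ∀ q ∈ Q,
        (((Finset.univ.filter (fun B : Matrix (Fin n) (Fin n) (ZMod p) =>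
            ∀ i j : Fin n, (w : ℤ) < |(i : ℤ) - (j : ℤ)| → B i j = 0)).card : ℝ))
            * (p : ℝ) ^ (-(2 * (w : ℤ) + 2))
          ≤ ∑ v ∈ V q,
              (((Finset.univ.filter (fun B : Matrix (Fin n) (Fin n) (ZMod p) =>
                ∀ i j : Fin n, (w : ℤ) < |(i : ℤ) - (j : ℤ)| → B i j = 0)).filter
                  (fun B => B.mulVec v = 0)).card : ℝ) := by
      intro q hq
      obtain ⟨h1, h2⟩ := hQfacts q hq
      have hab : c + q.1 < c + q.2 := by clear * - h1; omega
      have hbn : c + q.2 < n := by clear * - h1 h2 hcn; omega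
      exact perPair p n w (c + q.1) (c + q.2) hab hbn
    -- Step B : double counting (in ℕ)
    have stepB : ∑ B ∈ Finset.univ.filter (fun B : Matrix (Fin n) (Fin n) (ZMod p) =>
          ∀ i j : Fin n, (w : ℤ) < |(i : ℤ) - (j : ℤ)| → B i j = 0),
          ((Q.biUnion V).filter (fun v => B.mulVec v = 0)).card
        = ∑ v ∈ Q.biUnion V,
            ((Finset.univ.filter (fun B : Matrix (Fin n) (Fin n) (ZMod p) =>
              ∀ i j : Fin n, (w : ℤ) < |(i : ℤ) - (j : ℤ)| → B i j = 0)).filter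
                (fun B => B.mulVec v = 0)).card := by
      simp only [Finset.card_filter]
      exact Finset.sum_comm
    -- Step A : inclusion (in ℕ)
    have stepA : ∀ B : Matrix (Fin n) (Fin n) (ZMod p),
        ((Q.biUnion V).filter (fun v => B.mulVec v = 0)).card
          ≤ (Finset.univ.filter (fun v : Fin n → ZMod p => v ≠ 0 ∧
              (∀ i : Fin n, v i ≠ 0 → c ≤ (i : ℕ) ∧ (i : ℕ) ≤ c + n₁ - 1) ∧
              B.mulVec v = 0)).card := by
      intro B
      apply Finset.card_le_card
      intro v hv
      rw [Finset.mem_filter] at hv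
      obtain ⟨hvU, hvB⟩ := hv
      rw [Finset.mem_biUnion] at hvU
      obtain ⟨q, hqQ, hvq⟩ := hvU
      simp only [hV, Finset.mem_filter, Finset.mem_univ, true_and] at hvq
      obtain ⟨hsupp, ⟨j1, hj1, hvj1⟩, -⟩ := hvq
      obtain ⟨h1, h2⟩ := hQfacts q hqQ
      rw [Finset.mem_filter]
      refine ⟨Finset.mem_univ _, ?_, ?_, hvB⟩
      · intro h0
        exact hvj1 (by rw [h0]; rfl)
      · intro i hi
        obtain ⟨l, r⟩ := hsupp i hi
        clear * - l r h1 h2 hn₁ hcn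
        omega
    -- assemble
    calc (n₁.choose 2 : ℝ) * (p : ℝ) ^ (-(2 * (w : ℤ) + 2))
          * (((Finset.univ.filter (fun B : Matrix (Fin n) (Fin n) (ZMod p) =>
              ∀ i j : Fin n, (w : ℤ) < |(i : ℤ) - (j : ℤ)| → B i j = 0)).card : ℝ))
        = ∑ _q ∈ Q, (((Finset.univ.filter (fun B : Matrix (Fin n) (Fin n) (ZMod p) =>
            ∀ i j : Fin n, (w : ℤ) < |(i : ℤ) - (j : ℤ)| → B i j = 0)).card : ℝ))
              * (p : ℝ) ^ (-(2 * (w : ℤ) + 2)) := by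
          rw [Finset.sum_const, hQ, pairsCard n₁, nsmul_eq_mul]
          ring
      _ ≤ ∑ q ∈ Q, ∑ v ∈ V q,
            (((Finset.univ.filter (fun B : Matrix (Fin n) (Fin n) (ZMod p) =>
              ∀ i j : Fin n, (w : ℤ) < |(i : ℤ) - (j : ℤ)| → B i j = 0)).filter
                (fun B => B.mulVec v = 0)).card : ℝ) :=
          Finset.sum_le_sum stepD
      _ = ((∑ v ∈ Q.biUnion V,
            ((Finset.univ.filter (fun B : Matrix (Fin n) (Fin n) (ZMod p) =>
              ∀ i j : Fin n, (w : ℤ) < |(i : ℤ) - (j : ℤ)| → B i j = 0)).filter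
                (fun B => B.mulVec v = 0)).card : ℕ) : ℝ) := by
          rw [Finset.sum_biUnion hdisj]
          push_cast
          rfl
      _ = ((∑ B ∈ Finset.univ.filter (fun B : Matrix (Fin n) (Fin n) (ZMod p) =>
              ∀ i j : Fin n, (w : ℤ) < |(i : ℤ) - (j : ℤ)| → B i j = 0),
            ((Q.biUnion V).filter (fun v => B.mulVec v = 0)).card : ℕ) : ℝ) := by
          rw [stepB]
      _ ≤ ∑ B ∈ Finset.univ.filter (fun B : Matrix (Fin n) (Fin n) (ZMod p) =>
              ∀ i j : Fin n, (w : ℤ) < |(i : ℤ) - (j : ℤ)| → B i j = 0),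
            (Nat.card {v : Fin n → ZMod p // v ≠ 0 ∧
                (∀ i : Fin n, v i ≠ 0 → c ≤ (i : ℕ) ∧ (i : ℕ) ≤ c + n₁ - 1) ∧
                B.mulVec v = 0} : ℝ) := by
          push_cast
          apply Finset.sum_le_sum
          intro B _
          have := stepA B
          rw [← hrw B] at this
          exact_mod_cast this
  · -- easy numeric inequality
    have key : n₁ ^ 2 ≤ 4 * n₁.choose 2 := by
      rw [Nat.choose_two_right]
      obtain ⟨k, hk⟩ := Nat.even_mul_pred_self n₁
      have h3 : n₁ ^ 2 ≤ 2 * (n₁ * (n₁ - 1)) := by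
        calc n₁ ^ 2 = n₁ * n₁ := sq n₁
          _ ≤ n₁ * (2 * (n₁ - 1)) := Nat.mul_le_mul_left _ (by omega)
          _ = 2 * (n₁ * (n₁ - 1)) := by ring
      rw [hk] at h3 ⊢
      have h4 : (k + k) / 2 = k := by omega
      rw [h4]
      omega
    have keyR : (n₁ : ℝ) ^ 2 ≤ 4 * (n₁.choose 2 : ℝ) := by exact_mod_cast key
    rw [div_le_iff₀ (by positivity : (0:ℝ) < 4 * (p:ℝ) ^ 2)]
    have hz : (p : ℝ) ^ (-(2 * (w : ℤ) + 2)) * (p : ℝ) ^ 2 = (p : ℝ) ^ (-(2 * (w : ℤ))) := by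
      rw [← zpow_natCast (p : ℝ) 2, ← zpow_add₀ hpne]
      norm_num
    calc (n₁ : ℝ) ^ 2 * (p : ℝ) ^ (-(2 * (w : ℤ)))
        ≤ (4 * (n₁.choose 2 : ℝ)) * (p : ℝ) ^ (-(2 * (w : ℤ))) :=
          mul_le_mul_of_nonneg_right keyR (by positivity)
      _ = (n₁.choose 2 : ℝ) * (p : ℝ) ^ (-(2 * (w : ℤ) + 2)) * (4 * (p : ℝ) ^ 2) := by
          rw [show (n₁.choose 2 : ℝ) * (p : ℝ) ^ (-(2 * (w : ℤ) + 2)) * (4 * (p : ℝ) ^ 2)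
              = (4 * (n₁.choose 2 : ℝ)) * ((p : ℝ) ^ (-(2 * (w : ℤ) + 2)) * (p : ℝ) ^ 2) by ring,
            hz]
end

section
/- Let P and Q be n×n prescription matrices (entries in {0,1}) with P(i,j) ≤ Q(i,j) for all i, j. Let B_P and B_Q be Haar-uniform elements of the sets of matrices over Z_p supported on P and Q respectively. Then for every finite abelian p-group G, E|Sur(cok(B_P), G)| ≥ E|Sur(cok(B_Q), G)| ≥ 1 - |Sg(G)| p^{-n}. -/
open MeasureTheory
open scoped ENNReal

namespace Stmt18

variable {p : ℕ} [Fact p.Prime] {n : ℕ} {G : Type*} [AddCommGroup G] [Module ℤ_[p] G]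

/-- The linear map `c ↦ ∑ j, c j • (if P i j then g j else 0)`. -/
noncomputable def Lmap (p : ℕ) [Fact p.Prime] {n : ℕ} {G : Type*} [AddCommGroup G] [Module ℤ_[p] G] (P : Matrix (Fin n) (Fin n) Bool) (g : Fin n → G) (i : Fin n) :
    (Fin n → ℤ_[p]) →ₗ[ℤ_[p]] G :=
  (Pi.basisFun ℤ_[p] (Fin n)).constr ℤ_[p] (fun j => if P i j then g j else 0)

theorem Lmap_apply (P : Matrix (Fin n) (Fin n) Bool) (g : Fin n → G) (i : Fin n)
    (c : Fin n → ℤ_[p]) :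
    Lmap p P g i c = ∑ j, c j • (if P i j then g j else 0) := by
  simp [Lmap, Module.Basis.constr_apply_fintype, Pi.basisFun_equivFun]

/-- The subgroup (submodule) generated by the entries of `g` allowed by row `i` of `P`. -/
noncomputable def Hsub (p : ℕ) [Fact p.Prime] {n : ℕ} {G : Type*} [AddCommGroup G] [Module ℤ_[p] G] (P : Matrix (Fin n) (Fin n) Bool) (g : Fin n → G) (i : Fin n) :
    Submodule ℤ_[p] G :=
  LinearMap.range (Lmap p P g i)

theorem Hsub_mono {P Q : Matrix (Fin n) (Fin n) Bool} (hPQ : ∀ i j, P i j = true → Q i j = true)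
    (g : Fin n → G) (i : Fin n) : Hsub p P g i ≤ Hsub p Q g i := by
  rintro x ⟨c, rfl⟩
  refine ⟨fun j => if P i j then c j else 0, ?_⟩
  rw [Lmap_apply, Lmap_apply]
  refine Finset.sum_congr rfl fun j _ => ?_
  by_cases hP : P i j = true
  · rw [hPQ i j hP]; simp [hP]
  · simp [hP]

theorem row_mem_Hsub (P : Matrix (Fin n) (Fin n) Bool) (g : Fin n → G)
    (B : Matrix (Fin n) (Fin n) ℤ_[p]) (hB : ∀ i j, P i j = false → B i j = 0) (i : Fin n) :
    (∑ j, B i j • g j) ∈ Hsub p P g i := by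
  refine ⟨fun j => B i j, ?_⟩
  rw [Lmap_apply]
  refine Finset.sum_congr rfl fun j _ => ?_
  by_cases hP : P i j = true
  · simp [hP]
  · simp only [Bool.not_eq_true] at hP
    simp [hP, hB i j hP]

open Classical in
theorem card_surj_eq [Fintype G] (B : Matrix (Fin n) (Fin n) ℤ_[p]) :
    Nat.card {f : ((Fin n → ℤ_[p]) ⧸ Submodule.span ℤ_[p] (Set.range B)) →ₗ[ℤ_[p]] G //
        Function.Surjective f}
      = (Finset.univ.filter (fun g : Fin n → G =>
          Submodule.span ℤ_[p] (Set.range g) = ⊤ ∧ ∀ i, ∑ j, B i j • g j = 0)).card := by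
  set N := Submodule.span ℤ_[p] (Set.range B) with hN
  -- step 1: maps from the quotient = maps killing N
  have e1 : {f : ((Fin n → ℤ_[p]) ⧸ N) →ₗ[ℤ_[p]] G // Function.Surjective f}
      ≃ {f : (Fin n → ℤ_[p]) →ₗ[ℤ_[p]] G // Function.Surjective f ∧ N ≤ LinearMap.ker f} := by
    refine ⟨fun f => ⟨(f : _ →ₗ[ℤ_[p]] G).comp N.mkQ, ?_, ?_⟩,
        fun f => ⟨N.liftQ f.1 f.2.2, ?_⟩, ?_, ?_⟩
    · exact f.2.comp N.mkQ_surjective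
    · intro x hx
      simp [LinearMap.mem_ker, (Submodule.Quotient.mk_eq_zero N).2 hx,
        show N.mkQ x = Submodule.Quotient.mk x from rfl]
    · intro y
      obtain ⟨x, hx⟩ := f.2.1 y
      exact ⟨N.mkQ x, by rwa [show N.mkQ x = Submodule.Quotient.mk x from rfl,
        Submodule.liftQ_apply]⟩
    · intro f
      refine Subtype.ext (LinearMap.ext fun x => ?_)
      obtain ⟨y, rfl⟩ := N.mkQ_surjective x
      rfl
    · intro f
      refine Subtype.ext (LinearMap.ext fun x => ?_)
      rfl
  -- step 2: linear maps correspond to tuples via the standard basis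
  have e2 : {f : (Fin n → ℤ_[p]) →ₗ[ℤ_[p]] G // Function.Surjective f ∧ N ≤ LinearMap.ker f}
      ≃ {g : Fin n → G // Submodule.span ℤ_[p] (Set.range g) = ⊤ ∧ ∀ i, ∑ j, B i j • g j = 0} := by
    refine Equiv.symm (Equiv.subtypeEquiv ((Pi.basisFun ℤ_[p] (Fin n)).constr ℤ_[p]
      (M' := G)).toEquiv ?_)
    intro g
    have happ : ∀ x : Fin n → ℤ_[p],
        ((Pi.basisFun ℤ_[p] (Fin n)).constr ℤ_[p] g) x = ∑ j, x j • g j := by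
      intro x
      simp [Module.Basis.constr_apply_fintype, Pi.basisFun_equivFun]
    simp only [LinearEquiv.coe_toEquiv]
    constructor
    · rintro ⟨h1, h2⟩
      refine ⟨?_, ?_⟩
      · rw [← LinearMap.range_eq_top, Module.Basis.constr_range]
        exact h1
      · rw [hN, Submodule.span_le]; refine Set.range_subset_iff.2 ?_
        intro i
        rw [SetLike.mem_coe, LinearMap.mem_ker, happ]
        exact h2 i
    · rintro ⟨h1, h2⟩
      refine ⟨?_, ?_⟩
      · rw [← LinearMap.range_eq_top] at h1
        rwa [Module.Basis.constr_range] at h1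
      · intro i
        have := h2 (Submodule.subset_span (Set.mem_range_self i))
        rwa [LinearMap.mem_ker, happ] at this
  rw [Nat.card_congr (e1.trans e2), Nat.card_eq_fintype_card, Fintype.card_subtype]


theorem smul_eq_val_smul {k : ℕ} {x : G} (hx : (p ^ k : ℕ) • x = 0) (c : ℤ_[p]) :
    c • x = (PadicInt.toZModPow k c).val • x := by
  haveI : NeZero (p ^ k) := ⟨pow_ne_zero k (Fact.out (p := p.Prime)).ne_zero⟩
  set m : ℕ := (PadicInt.toZModPow k c).val with hm
  have hker : c - (m : ℤ_[p]) ∈ RingHom.ker (PadicInt.toZModPow (p := p) k) := by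
    rw [RingHom.mem_ker, map_sub, map_natCast, hm, ZMod.natCast_zmod_val, sub_self]
  rw [PadicInt.ker_toZModPow, Ideal.mem_span_singleton] at hker
  obtain ⟨d, hd⟩ := hker
  have hc : c = (m : ℤ_[p]) + (p : ℤ_[p]) ^ k * d := by linear_combination hd
  have hpk : ((p : ℤ_[p]) ^ k) • x = 0 := by
    rw [show ((p : ℤ_[p]) ^ k) = ((p ^ k : ℕ) : ℤ_[p]) by push_cast; ring,
      Nat.cast_smul_eq_nsmul]
    exact hx
  rw [hc, add_smul, mul_comm, mul_smul, hpk, smul_zero, add_zero, Nat.cast_smul_eq_nsmul]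

theorem measurableSet_toZModPow_fiber {k : ℕ} (r : ZMod (p ^ k)) :
    letI : MeasurableSpace ℤ_[p] := borel ℤ_[p]
    MeasurableSet {x : ℤ_[p] | PadicInt.toZModPow k x = r} := by
  letI : MeasurableSpace ℤ_[p] := borel ℤ_[p]
  haveI : BorelSpace ℤ_[p] := ⟨rfl⟩
  rcases Set.eq_empty_or_nonempty {x : ℤ_[p] | PadicInt.toZModPow k x = r} with h | ⟨x₀, hx₀⟩
  · rw [h]; exact MeasurableSet.empty
  · have : {x : ℤ_[p] | PadicInt.toZModPow k x = r}
        = Metric.closedBall x₀ ((p : ℝ) ^ (-(k : ℤ))) := by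
      ext y
      simp only [Set.mem_setOf_eq, Metric.mem_closedBall, dist_eq_norm]
      rw [PadicInt.norm_le_pow_iff_mem_span_pow, ← PadicInt.ker_toZModPow, RingHom.mem_ker,
        map_sub, hx₀, sub_eq_zero]
    rw [this]
    exact Metric.isClosed_closedBall.measurableSet



section Meas

variable [MeasurableSpace (Matrix (Fin n) (Fin n) ℤ_[p])]
  [BorelSpace (Matrix (Fin n) (Fin n) ℤ_[p])]

theorem measurable_entry (i j : Fin n) :
    letI : MeasurableSpace ℤ_[p] := borel ℤ_[p]
    Measurable fun B : Matrix (Fin n) (Fin n) ℤ_[p] => B i j := by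
  letI : MeasurableSpace ℤ_[p] := borel ℤ_[p]
  haveI : BorelSpace ℤ_[p] := ⟨rfl⟩
  have hc : Continuous fun B : Matrix (Fin n) (Fin n) ℤ_[p] => B i j :=
    (continuous_apply j).comp (continuous_apply (A := fun _ : Fin n => Fin n → ℤ_[p]) i)
  exact hc.measurable

theorem measurableSet_rowSum {k : ℕ} (hk : ∀ x : G, (p ^ k : ℕ) • x = 0) (g : Fin n → G)
    (i : Fin n) (c : G) :
    MeasurableSet {B : Matrix (Fin n) (Fin n) ℤ_[p] | ∑ j, B i j • g j = c} := by
  letI : MeasurableSpace ℤ_[p] := borel ℤ_[p]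
  haveI : BorelSpace ℤ_[p] := ⟨rfl⟩
  haveI : NeZero (p ^ k) := ⟨pow_ne_zero k (Fact.out (p := p.Prime)).ne_zero⟩
  have key : {B : Matrix (Fin n) (Fin n) ℤ_[p] | ∑ j, B i j • g j = c}
      = ⋃ r ∈ {r : Fin n → ZMod (p ^ k) | ∑ j, (r j).val • g j = c},
          ⋂ j, {B : Matrix (Fin n) (Fin n) ℤ_[p] | PadicInt.toZModPow k (B i j) = r j} := by
    ext B
    simp only [Set.mem_setOf_eq, Set.mem_iUnion, Set.mem_iInter, exists_prop]
    constructor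
    · intro hB
      refine ⟨fun j => PadicInt.toZModPow k (B i j), ?_, fun j => rfl⟩
      rw [← hB]
      exact (Finset.sum_congr rfl fun j _ => (smul_eq_val_smul (hk (g j)) (B i j)).symm)
    · rintro ⟨r, hr, hBr⟩
      rw [← hr]
      refine Finset.sum_congr rfl fun j _ => ?_
      rw [smul_eq_val_smul (hk (g j)) (B i j), hBr j]
  rw [key]
  refine MeasurableSet.biUnion (Set.to_countable _) fun r _ => ?_
  exact MeasurableSet.iInter fun j => (measurable_entry i j) (measurableSet_toZModPow_fiber (r j))

theorem measurableSet_supp (P : Matrix (Fin n) (Fin n) Bool) :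
    MeasurableSet {B : Matrix (Fin n) (Fin n) ℤ_[p] | ∀ i j, P i j = false → B i j = 0} := by
  letI : MeasurableSpace ℤ_[p] := borel ℤ_[p]
  haveI : BorelSpace ℤ_[p] := ⟨rfl⟩
  have : {B : Matrix (Fin n) (Fin n) ℤ_[p] | ∀ i j, P i j = false → B i j = 0}
      = ⋂ i, ⋂ j, {B : Matrix (Fin n) (Fin n) ℤ_[p] | P i j = false → B i j = 0} := by
    ext B; simp
  rw [this]
  refine MeasurableSet.iInter fun i => MeasurableSet.iInter fun j => ?_
  by_cases hP : P i j = false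
  · have : {B : Matrix (Fin n) (Fin n) ℤ_[p] | P i j = false → B i j = 0}
        = (fun B : Matrix (Fin n) (Fin n) ℤ_[p] => B i j) ⁻¹' {0} := by
      ext B; simp [hP]
    rw [this]
    exact (measurable_entry i j) (measurableSet_singleton 0)
  · have : {B : Matrix (Fin n) (Fin n) ℤ_[p] | P i j = false → B i j = 0} = Set.univ := by
      ext B; simp [hP]
    rw [this]
    exact MeasurableSet.univ

theorem measurable_addRight (C : Matrix (Fin n) (Fin n) ℤ_[p]) :
    Measurable fun B : Matrix (Fin n) (Fin n) ℤ_[p] => B + C := by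
  have : Continuous fun B : Matrix (Fin n) (Fin n) ℤ_[p] => B + C := by
    exact continuous_id.add continuous_const
  exact this.measurable

theorem measure_fiber [Fintype G]
    (μ : Measure (Matrix (Fin n) (Fin n) ℤ_[p])) [IsProbabilityMeasure μ]
    (P : Matrix (Fin n) (Fin n) Bool)
    (hsupp : μ {B | ¬ ∀ i j : Fin n, P i j = false → B i j = 0} = 0)
    (hinv : ∀ C : Matrix (Fin n) (Fin n) ℤ_[p],
      (∀ i j : Fin n, P i j = false → C i j = 0) → μ.map (fun B => B + C) = μ)
    {k : ℕ} (hk : ∀ x : G, (p ^ k : ℕ) • x = 0) (g : Fin n → G) :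
    μ {B | ∀ i, ∑ j, B i j • g j = 0}
      = (∏ i, (Nat.card (Hsub p P g i) : ℝ≥0∞))⁻¹ := by
  set Supp := {B : Matrix (Fin n) (Fin n) ℤ_[p] | ∀ i j, P i j = false → B i j = 0} with hSupp
  have hSuppM : MeasurableSet Supp := measurableSet_supp P
  have hSuppc : μ Suppᶜ = 0 := hsupp
  have hSupp1 : μ Supp = 1 := by
    have h2 := measure_add_measure_compl (μ := μ) hSuppM
    rw [hSuppc, add_zero, measure_univ] at h2
    exact h2
  set A : (Fin n → G) → Set (Matrix (Fin n) (Fin n) ℤ_[p]) := fun h =>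
    Supp ∩ ⋂ i, {B | ∑ j, B i j • g j = h i} with hA
  have hAmeas : ∀ h, MeasurableSet (A h) := fun h =>
    hSuppM.inter (MeasurableSet.iInter fun i => measurableSet_rowSum hk g i (h i))
  have htrans : ∀ h : Fin n → G, (∀ i, h i ∈ Hsub p P g i) → μ (A h) = μ (A 0) := by
    intro h hh
    choose c hc using hh
    set C : Matrix (Fin n) (Fin n) ℤ_[p] := Matrix.of fun i j => if P i j then c i j else 0
      with hC
    have hCsupp : ∀ i j, P i j = false → C i j = 0 := by
      intro i j hij; simp [hC, hij]
    have hCrow : ∀ i, ∑ j, C i j • g j = h i := by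
      intro i
      rw [← hc i, Lmap_apply]
      refine Finset.sum_congr rfl fun j _ => ?_
      by_cases hP : P i j = true
      · simp [hC, hP]
      · simp only [Bool.not_eq_true] at hP
        simp [hC, hP]
    have hadd : ∀ B : Matrix (Fin n) (Fin n) ℤ_[p], ∀ i j, (B + C) i j = B i j + C i j :=
      fun B i j => rfl
    have hpre : (fun B : Matrix (Fin n) (Fin n) ℤ_[p] => B + C) ⁻¹' (A h) = A 0 := by
      ext B
      simp only [Set.mem_preimage, hA, Set.mem_inter_iff, Set.mem_iInter, Set.mem_setOf_eq,
        hSupp, Pi.zero_apply]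
      constructor
      · rintro ⟨h1, h2⟩
        refine ⟨fun i j hij => ?_, fun i => ?_⟩
        · have := h1 i j hij
          rw [hadd, hCsupp i j hij, add_zero] at this
          exact this
        · have := h2 i
          simp only [hadd, add_smul, Finset.sum_add_distrib, hCrow i] at this
          simpa using this
      · rintro ⟨h1, h2⟩
        refine ⟨fun i j hij => ?_, fun i => ?_⟩
        · rw [hadd, hCsupp i j hij, add_zero]
          exact h1 i j hij
        · simp only [hadd, add_smul, Finset.sum_add_distrib, hCrow i, h2 i, zero_add]
    calc μ (A h) = μ.map (fun B => B + C) (A h) := by rw [hinv C hCsupp]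
      _ = μ ((fun B : Matrix (Fin n) (Fin n) ℤ_[p] => B + C) ⁻¹' (A h)) :=
          Measure.map_apply (measurable_addRight C) (hAmeas h)
      _ = μ (A 0) := by rw [hpre]
  haveI : ∀ i : Fin n, Finite (Hsub p P g i) := fun i => Subtype.finite
  haveI : ∀ i : Fin n, Fintype (Hsub p P g i) := fun i => Fintype.ofFinite _
  have hcover : Supp = ⋃ h : (i : Fin n) → Hsub p P g i, A (fun i => (h i : G)) := by
    ext B
    simp only [Set.mem_iUnion, hA, Set.mem_inter_iff, Set.mem_iInter, Set.mem_setOf_eq]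
    constructor
    · intro hB
      exact ⟨fun i => ⟨∑ j, B i j • g j, row_mem_Hsub P g B hB i⟩, hB, fun i => rfl⟩
    · rintro ⟨h, hB, _⟩
      exact hB
  have hdisj : Pairwise fun h h' : (i : Fin n) → Hsub p P g i =>
      Disjoint (A fun i => (h i : G)) (A fun i => (h' i : G)) := by
    intro h h' hne
    rw [Set.disjoint_left]
    rintro B ⟨_, hB1⟩ ⟨_, hB2⟩
    simp only [Set.mem_iInter, Set.mem_setOf_eq] at hB1 hB2
    exact hne (funext fun i => Subtype.ext ((hB1 i).symm.trans (hB2 i)))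
  have hsum : μ Supp = ∑' h : (i : Fin n) → Hsub p P g i, μ (A fun i => (h i : G)) := by
    rw [hcover, measure_iUnion hdisj fun h => hAmeas _]
  set N : ℝ≥0∞ := ∏ i, (Nat.card (Hsub p P g i) : ℝ≥0∞) with hN
  have hNcast : (Fintype.card ((i : Fin n) → Hsub p P g i) : ℝ≥0∞) = N := by
    rw [hN, Fintype.card_pi]
    push_cast
    refine Finset.prod_congr rfl fun i _ => ?_
    rw [Nat.card_eq_fintype_card]
  have hone : N * μ (A 0) = 1 := by
    rw [← hNcast, ← hSupp1, hsum]
    rw [tsum_fintype]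
    have : ∀ h : (i : Fin n) → Hsub p P g i, μ (A fun i => (h i : G)) = μ (A 0) :=
      fun h => htrans _ fun i => (h i).2
    simp only [this]
    rw [Finset.sum_const, Finset.card_univ, nsmul_eq_mul]
  have hN0 : N ≠ 0 := by
    rw [hN]
    refine Finset.prod_ne_zero_iff.2 fun i _ => ?_
    simp only [ne_eq, Nat.cast_eq_zero]
    exact Nat.card_pos.ne'
  have hNtop : N ≠ ⊤ := by
    rw [hN]
    exact (ENNReal.prod_lt_top fun i _ => ENNReal.natCast_lt_top _).ne
  have hA0 : μ (A 0) = N⁻¹ := by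
    have := congrArg (fun x => N⁻¹ * x) hone
    simp only [← mul_assoc, ENNReal.inv_mul_cancel hN0 hNtop, one_mul, mul_one] at this
    exact this
  rw [← hA0]
  have hTsub : {B : Matrix (Fin n) (Fin n) ℤ_[p] | ∀ i, ∑ j, B i j • g j = 0}
      ⊆ A 0 ∪ Suppᶜ := by
    intro B hB
    by_cases hBs : B ∈ Supp
    · left
      refine ⟨hBs, ?_⟩
      simp only [Set.mem_iInter, Set.mem_setOf_eq, Pi.zero_apply]
      exact hB
    · right; exact hBs
  have hAT : A 0 ⊆ {B : Matrix (Fin n) (Fin n) ℤ_[p] | ∀ i, ∑ j, B i j • g j = 0} := by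
    rintro B ⟨_, hB⟩
    simp only [Set.mem_iInter, Set.mem_setOf_eq, Pi.zero_apply] at hB
    exact hB
  refine le_antisymm ?_ (measure_mono hAT)
  calc μ {B : Matrix (Fin n) (Fin n) ℤ_[p] | ∀ i, ∑ j, B i j • g j = 0}
      ≤ μ (A 0 ∪ Suppᶜ) := measure_mono hTsub
    _ ≤ μ (A 0) + μ Suppᶜ := measure_union_le _ _
    _ = μ (A 0) := by rw [hSuppc, add_zero]

open Classical in
theorem lintegral_eq [Fintype G]
    (μ : Measure (Matrix (Fin n) (Fin n) ℤ_[p])) [IsProbabilityMeasure μ]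
    (P : Matrix (Fin n) (Fin n) Bool)
    (hsupp : μ {B | ¬ ∀ i j : Fin n, P i j = false → B i j = 0} = 0)
    (hinv : ∀ C : Matrix (Fin n) (Fin n) ℤ_[p],
      (∀ i j : Fin n, P i j = false → C i j = 0) → μ.map (fun B => B + C) = μ)
    {k : ℕ} (hk : ∀ x : G, (p ^ k : ℕ) • x = 0) :
    ∫⁻ B, (Nat.card {f : ((Fin n → ℤ_[p]) ⧸ Submodule.span ℤ_[p] (Set.range B)) →ₗ[ℤ_[p]] G //
            Function.Surjective f} : ℝ≥0∞) ∂μ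
      = ∑ g ∈ Finset.univ.filter
            (fun g : Fin n → G => Submodule.span ℤ_[p] (Set.range g) = ⊤),
          (∏ i, (Nat.card (Hsub p P g i) : ℝ≥0∞))⁻¹ := by
  have hTmeas : ∀ g : Fin n → G,
      MeasurableSet {B : Matrix (Fin n) (Fin n) ℤ_[p] | ∀ i, ∑ j, B i j • g j = 0} := by
    intro g
    have : {B : Matrix (Fin n) (Fin n) ℤ_[p] | ∀ i, ∑ j, B i j • g j = 0}
        = ⋂ i, {B : Matrix (Fin n) (Fin n) ℤ_[p] | ∑ j, B i j • g j = 0} := by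
      ext B; simp
    rw [this]
    exact MeasurableSet.iInter fun i => measurableSet_rowSum hk g i 0
  have hpt : ∀ B : Matrix (Fin n) (Fin n) ℤ_[p],
      (Nat.card {f : ((Fin n → ℤ_[p]) ⧸ Submodule.span ℤ_[p] (Set.range B)) →ₗ[ℤ_[p]] G //
          Function.Surjective f} : ℝ≥0∞)
        = ∑ g ∈ Finset.univ.filter
              (fun g : Fin n → G => Submodule.span ℤ_[p] (Set.range g) = ⊤),
            Set.indicator {B' : Matrix (Fin n) (Fin n) ℤ_[p] | ∀ i, ∑ j, B' i j • g j = 0}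
              (1 : Matrix (Fin n) (Fin n) ℤ_[p] → ℝ≥0∞) B := by
    intro B
    rw [card_surj_eq B]
    have : Finset.univ.filter (fun g : Fin n → G =>
          Submodule.span ℤ_[p] (Set.range g) = ⊤ ∧ ∀ i, ∑ j, B i j • g j = 0)
        = (Finset.univ.filter
            (fun g : Fin n → G => Submodule.span ℤ_[p] (Set.range g) = ⊤)).filter
              (fun g => ∀ i, ∑ j, B i j • g j = 0) := by
      rw [Finset.filter_filter]
    rw [this, Finset.card_filter]
    push_cast
    refine Finset.sum_congr rfl fun g _ => ?_
    rw [Set.indicator_apply]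
    simp only [Set.mem_setOf_eq, Pi.one_apply]
  calc ∫⁻ B, (Nat.card {f : ((Fin n → ℤ_[p]) ⧸ Submodule.span ℤ_[p] (Set.range B)) →ₗ[ℤ_[p]] G //
          Function.Surjective f} : ℝ≥0∞) ∂μ
      = ∫⁻ B, ∑ g ∈ Finset.univ.filter
            (fun g : Fin n → G => Submodule.span ℤ_[p] (Set.range g) = ⊤),
          Set.indicator {B' : Matrix (Fin n) (Fin n) ℤ_[p] | ∀ i, ∑ j, B' i j • g j = 0}
            (1 : Matrix (Fin n) (Fin n) ℤ_[p] → ℝ≥0∞) B ∂μ := by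
        exact lintegral_congr hpt
    _ = ∑ g ∈ Finset.univ.filter
            (fun g : Fin n → G => Submodule.span ℤ_[p] (Set.range g) = ⊤),
          ∫⁻ B, Set.indicator {B' : Matrix (Fin n) (Fin n) ℤ_[p] | ∀ i, ∑ j, B' i j • g j = 0}
            (1 : Matrix (Fin n) (Fin n) ℤ_[p] → ℝ≥0∞) B ∂μ := by
        exact lintegral_finset_sum _ fun g _ => measurable_const.indicator (hTmeas g)
    _ = ∑ g ∈ Finset.univ.filter
            (fun g : Fin n → G => Submodule.span ℤ_[p] (Set.range g) = ⊤),
          (∏ i, (Nat.card (Hsub p P g i) : ℝ≥0∞))⁻¹ := by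
        refine Finset.sum_congr rfl fun g _ => ?_
        rw [lintegral_indicator_one (hTmeas g)]
        exact measure_fiber μ P hsupp hinv hk g

end Meas

theorem pgroup_card_proper [Fintype G] (hG : ∀ g : G, ∃ k : ℕ, (p ^ k : ℕ) • g = 0)
    (N : Submodule ℤ_[p] G) (hN : N ≠ ⊤) : p * Nat.card N ≤ Nat.card G := by
  have hp : p.Prime := Fact.out
  have hpG : IsPGroup p (Multiplicative G) := by
    intro x
    obtain ⟨k, hk⟩ := hG x.toAdd
    exact ⟨k, by rw [← ofAdd_toAdd x, ← ofAdd_nsmul, hk, ofAdd_zero]⟩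
  obtain ⟨m, hm⟩ := IsPGroup.iff_card.1 hpG
  have hmG : Nat.card G = p ^ m := by
    rw [← hm]
    exact Nat.card_congr Multiplicative.toAdd.symm
  have hcardeq : Nat.card N = Nat.card N.toAddSubgroup :=
    Nat.card_congr (Equiv.subtypeEquivRight fun x => (Submodule.mem_toAddSubgroup N).symm)
  have hdvd : Nat.card N ∣ Nat.card G := by
    rw [hcardeq]
    exact AddSubgroup.card_addSubgroup_dvd_card N.toAddSubgroup
  rw [hmG] at hdvd
  obtain ⟨a, ham, ha⟩ := (Nat.dvd_prime_pow hp).1 hdvd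
  have hane : a ≠ m := by
    intro h
    apply hN
    have hcard : Nat.card N.toAddSubgroup = Nat.card G := by
      rw [← hcardeq, ha, h, hmG]
    have := AddSubgroup.eq_top_of_card_eq N.toAddSubgroup hcard
    refine Submodule.toAddSubgroup_injective ?_
    rw [this]
    rfl
  have : a + 1 ≤ m := lt_of_le_of_ne ham hane
  calc p * Nat.card N = p ^ (a + 1) := by rw [ha]; ring
    _ ≤ p ^ m := Nat.pow_le_pow_right hp.pos this
    _ = Nat.card G := hmG.symm

open Classical in
theorem nongen_count [Fintype G] (hG : ∀ g : G, ∃ k : ℕ, (p ^ k : ℕ) • g = 0) :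
    (Finset.univ.filter
        (fun g : Fin n → G => Submodule.span ℤ_[p] (Set.range g) ≠ ⊤)).card * p ^ n
      ≤ Nat.card (AddSubgroup G) * (Nat.card G) ^ n := by
  haveI : Finite (Submodule ℤ_[p] G) :=
    Finite.of_injective (SetLike.coe : Submodule ℤ_[p] G → Set G) SetLike.coe_injective
  haveI : Finite (AddSubgroup G) :=
    Finite.of_injective (SetLike.coe : AddSubgroup G → Set G) SetLike.coe_injective
  haveI : Fintype (Submodule ℤ_[p] G) := Fintype.ofFinite _
  set T : Finset (Submodule ℤ_[p] G) := Finset.univ.filter (· ≠ ⊤) with hT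
  have hsub : Finset.univ.filter
      (fun g : Fin n → G => Submodule.span ℤ_[p] (Set.range g) ≠ ⊤)
      ⊆ T.biUnion (fun N => Finset.univ.filter fun g : Fin n → G => ∀ j, g j ∈ N) := by
    intro g hg
    rw [Finset.mem_filter] at hg
    rw [Finset.mem_biUnion]
    refine ⟨Submodule.span ℤ_[p] (Set.range g), ?_, ?_⟩
    · rw [hT, Finset.mem_filter]
      exact ⟨Finset.mem_univ _, hg.2⟩
    · rw [Finset.mem_filter]
      exact ⟨Finset.mem_univ _, fun j => Submodule.subset_span (Set.mem_range_self j)⟩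
  have hcount : ∀ N : Submodule ℤ_[p] G,
      (Finset.univ.filter fun g : Fin n → G => ∀ j, g j ∈ N).card = (Nat.card N) ^ n := by
    intro N
    rw [← Fintype.card_subtype]
    rw [Fintype.card_congr (Equiv.subtypePiEquivPi (p := fun _ : Fin n => (· ∈ N)))]
    rw [Fintype.card_pi]
    simp [Nat.card_eq_fintype_card]
  calc (Finset.univ.filter
        (fun g : Fin n → G => Submodule.span ℤ_[p] (Set.range g) ≠ ⊤)).card * p ^ n
      ≤ (T.biUnion (fun N => Finset.univ.filter fun g : Fin n → G => ∀ j, g j ∈ N)).card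
          * p ^ n := Nat.mul_le_mul_right _ (Finset.card_le_card hsub)
    _ ≤ (∑ N ∈ T, (Finset.univ.filter fun g : Fin n → G => ∀ j, g j ∈ N).card) * p ^ n :=
        Nat.mul_le_mul_right _ (Finset.card_biUnion_le)
    _ = ∑ N ∈ T, (Nat.card N) ^ n * p ^ n := by
        rw [Finset.sum_mul]
        exact Finset.sum_congr rfl fun N _ => by rw [hcount N]
    _ ≤ ∑ N ∈ T, (Nat.card G) ^ n := by
        refine Finset.sum_le_sum fun N hN => ?_
        rw [hT, Finset.mem_filter] at hN
        calc (Nat.card N) ^ n * p ^ n = (p * Nat.card N) ^ n := by rw [mul_pow]; ring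
          _ ≤ (Nat.card G) ^ n := Nat.pow_le_pow_left (pgroup_card_proper hG N hN.2) n
    _ = T.card * (Nat.card G) ^ n := by rw [Finset.sum_const, smul_eq_mul]
    _ ≤ Nat.card (AddSubgroup G) * (Nat.card G) ^ n := by
        refine Nat.mul_le_mul_right _ ?_
        calc T.card ≤ Fintype.card (Submodule ℤ_[p] G) := Finset.card_le_univ _
          _ = Nat.card (Submodule ℤ_[p] G) := (Nat.card_eq_fintype_card).symm
          _ ≤ Nat.card (AddSubgroup G) :=
              Nat.card_le_card_of_injective _ Submodule.toAddSubgroup_injective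


end Stmt18

open Stmt18 in
/-- Let `P ≤ Q` (entrywise) be `n × n` prescription matrices (entries in
`{0,1}`, formalized as `Bool`-valued matrices), and let `B_P, B_Q` be Haar-uniform on the
sets of `ℤ_[p]`-matrices supported on `P` resp. `Q` (Haar-uniformity formalized via
translation invariance and support).  Then for every finite abelian `p`-group `G`,
`E|Sur(cok(B_P), G)| ≥ E|Sur(cok(B_Q), G)| ≥ 1 - |Sg(G)| p^{-n}`. -/
theorem stmt18 (p : ℕ) [Fact p.Prime] (n : ℕ)
    (G : Type*) [AddCommGroup G] [Module ℤ_[p] G] [Fintype G]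
    (hG : ∀ g : G, ∃ k : ℕ, (p ^ k : ℕ) • g = 0)
    (P Q : Matrix (Fin n) (Fin n) Bool) (hPQ : ∀ i j, P i j = true → Q i j = true)
    [MeasurableSpace (Matrix (Fin n) (Fin n) ℤ_[p])]
    [BorelSpace (Matrix (Fin n) (Fin n) ℤ_[p])]
    (μP μQ : Measure (Matrix (Fin n) (Fin n) ℤ_[p]))
    [IsProbabilityMeasure μP] [IsProbabilityMeasure μQ]
    (hsuppP : μP {B | ¬ ∀ i j : Fin n, P i j = false → B i j = 0} = 0)
    (hsuppQ : μQ {B | ¬ ∀ i j : Fin n, Q i j = false → B i j = 0} = 0)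
    (hinvP : ∀ C : Matrix (Fin n) (Fin n) ℤ_[p],
      (∀ i j : Fin n, P i j = false → C i j = 0) → μP.map (fun B => B + C) = μP)
    (hinvQ : ∀ C : Matrix (Fin n) (Fin n) ℤ_[p],
      (∀ i j : Fin n, Q i j = false → C i j = 0) → μQ.map (fun B => B + C) = μQ) :
    (∫⁻ B, (Nat.card {f : ((Fin n → ℤ_[p]) ⧸ Submodule.span ℤ_[p] (Set.range B)) →ₗ[ℤ_[p]] G //
            Function.Surjective f} : ℝ≥0∞) ∂μQ
        ≤ ∫⁻ B, (Nat.card {f : ((Fin n → ℤ_[p]) ⧸ Submodule.span ℤ_[p] (Set.range B)) →ₗ[ℤ_[p]] G //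
            Function.Surjective f} : ℝ≥0∞) ∂μP) ∧
    (1 - (Nat.card (AddSubgroup G) : ℝ≥0∞) * ((p : ℝ≥0∞) ^ n)⁻¹
        ≤ ∫⁻ B, (Nat.card {f : ((Fin n → ℤ_[p]) ⧸ Submodule.span ℤ_[p] (Set.range B)) →ₗ[ℤ_[p]] G //
            Function.Surjective f} : ℝ≥0∞) ∂μQ) := by
  classical
  have hp : p.Prime := Fact.out
  obtain ⟨k, hk⟩ : ∃ k : ℕ, ∀ x : G, (p ^ k : ℕ) • x = 0 := by
    choose f hf using hG
    refine ⟨Finset.univ.sup f, fun x => ?_⟩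
    obtain ⟨d, hd⟩ := Nat.exists_eq_add_of_le (Finset.le_sup (f := f) (Finset.mem_univ x))
    rw [hd, pow_add, mul_comm, mul_smul, hf x, smul_zero]
  rw [lintegral_eq μP P hsuppP hinvP hk, lintegral_eq μQ Q hsuppQ hinvQ hk]
  haveI : ∀ (R : Matrix (Fin n) (Fin n) Bool) (g : Fin n → G) (i : Fin n),
      Finite (Hsub p R g i) := fun R g i => Subtype.finite
  set Sgen : Finset (Fin n → G) := Finset.univ.filter
    (fun g : Fin n → G => Submodule.span ℤ_[p] (Set.range g) = ⊤) with hSgen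
  constructor
  · refine Finset.sum_le_sum fun g _ => ?_
    rw [ENNReal.inv_le_inv]
    refine Finset.prod_le_prod' fun i _ => ?_
    exact_mod_cast Nat.card_le_card_of_injective
      (Submodule.inclusion (Hsub_mono hPQ g i)) (Submodule.inclusion_injective _)
  · set cG : ℝ≥0∞ := (Nat.card G : ℝ≥0∞) with hcG
    have hcG1 : 1 ≤ Nat.card G := Nat.card_pos
    have hGn0 : cG ^ n ≠ 0 := by
      apply pow_ne_zero
      rw [hcG]
      exact Nat.cast_ne_zero.2 Nat.card_pos.ne'
    have hGtop : cG ^ n ≠ ⊤ := by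
      apply ENNReal.pow_ne_top
      rw [hcG]
      exact ENNReal.natCast_ne_top _
    have hpn0 : ((p : ℝ≥0∞)) ^ n ≠ 0 := pow_ne_zero _ (by exact_mod_cast hp.pos.ne')
    have hpntop : ((p : ℝ≥0∞)) ^ n ≠ ⊤ := ENNReal.pow_ne_top (ENNReal.natCast_ne_top _)
    rw [tsub_le_iff_right]
    set Nongen : Finset (Fin n → G) := Finset.univ.filter
      (fun g : Fin n → G => Submodule.span ℤ_[p] (Set.range g) ≠ ⊤) with hNon
    have hcardsplit : Sgen.card + Nongen.card = Nat.card G ^ n := by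
      rw [hSgen, hNon]
      rw [show (Finset.univ.filter
          (fun g : Fin n → G => Submodule.span ℤ_[p] (Set.range g) ≠ ⊤))
        = (Finset.univ.filter
          (fun g : Fin n → G => ¬ Submodule.span ℤ_[p] (Set.range g) = ⊤)) from rfl]
      rw [Finset.card_filter_add_card_filter_not, Finset.card_univ]
      simp [Nat.card_eq_fintype_card]
    have hone : (1 : ℝ≥0∞)
        = (Sgen.card : ℝ≥0∞) * (cG ^ n)⁻¹ + (Nongen.card : ℝ≥0∞) * (cG ^ n)⁻¹ := by
      rw [← add_mul]
      have hcc : ((Sgen.card : ℝ≥0∞) + (Nongen.card : ℝ≥0∞)) = cG ^ n := by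
        rw [hcG]
        exact_mod_cast congrArg (fun m : ℕ => (m : ℝ≥0∞)) hcardsplit
      rw [hcc, ENNReal.mul_inv_cancel hGn0 hGtop]
    have h1 : (Sgen.card : ℝ≥0∞) * (cG ^ n)⁻¹
        ≤ ∑ g ∈ Sgen, (∏ i, (Nat.card (Hsub p Q g i) : ℝ≥0∞))⁻¹ := by
      have : (Sgen.card : ℝ≥0∞) * (cG ^ n)⁻¹ = ∑ _g ∈ Sgen, (cG ^ n)⁻¹ := by
        rw [Finset.sum_const, nsmul_eq_mul]
      rw [this]
      refine Finset.sum_le_sum fun g _ => ?_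
      rw [ENNReal.inv_le_inv]
      calc ∏ i, (Nat.card (Hsub p Q g i) : ℝ≥0∞)
          ≤ ∏ _i : Fin n, cG := by
            refine Finset.prod_le_prod' fun i _ => ?_
            rw [hcG]
            exact_mod_cast Nat.card_le_card_of_injective
              (fun x : Hsub p Q g i => (x : G)) Subtype.coe_injective
        _ = cG ^ n := by rw [Finset.prod_const, Finset.card_univ, Fintype.card_fin]
    have h2 : (Nongen.card : ℝ≥0∞) * (cG ^ n)⁻¹
        ≤ (Nat.card (AddSubgroup G) : ℝ≥0∞) * ((p : ℝ≥0∞) ^ n)⁻¹ := by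
      have hnat := nongen_count (p := p) (n := n) (G := G) hG
      have hcast : (Nongen.card : ℝ≥0∞) * (p : ℝ≥0∞) ^ n
          ≤ (Nat.card (AddSubgroup G) : ℝ≥0∞) * cG ^ n := by
        rw [hcG, hNon]
        exact_mod_cast hnat
      have e1 : ((Nongen.card : ℝ≥0∞) * (p : ℝ≥0∞) ^ n)
            * (((p : ℝ≥0∞) ^ n)⁻¹ * (cG ^ n)⁻¹)
          = (Nongen.card : ℝ≥0∞) * ((p : ℝ≥0∞) ^ n * ((p : ℝ≥0∞) ^ n)⁻¹) * (cG ^ n)⁻¹ := by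
        ring
      rw [ENNReal.mul_inv_cancel hpn0 hpntop, mul_one] at e1
      have e2 : ((Nat.card (AddSubgroup G) : ℝ≥0∞) * cG ^ n)
            * (((p : ℝ≥0∞) ^ n)⁻¹ * (cG ^ n)⁻¹)
          = (Nat.card (AddSubgroup G) : ℝ≥0∞) * (cG ^ n * (cG ^ n)⁻¹)
              * ((p : ℝ≥0∞) ^ n)⁻¹ := by
        ring
      rw [ENNReal.mul_inv_cancel hGn0 hGtop, mul_one] at e2
      calc (Nongen.card : ℝ≥0∞) * (cG ^ n)⁻¹
          = ((Nongen.card : ℝ≥0∞) * (p : ℝ≥0∞) ^ n)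
              * (((p : ℝ≥0∞) ^ n)⁻¹ * (cG ^ n)⁻¹) := e1.symm
        _ ≤ ((Nat.card (AddSubgroup G) : ℝ≥0∞) * cG ^ n)
              * (((p : ℝ≥0∞) ^ n)⁻¹ * (cG ^ n)⁻¹) := mul_le_mul_left hcast _
        _ = (Nat.card (AddSubgroup G) : ℝ≥0∞) * ((p : ℝ≥0∞) ^ n)⁻¹ := e2
    calc (1 : ℝ≥0∞)
        = (Sgen.card : ℝ≥0∞) * (cG ^ n)⁻¹ + (Nongen.card : ℝ≥0∞) * (cG ^ n)⁻¹ := hone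
      _ ≤ (∑ g ∈ Sgen, (∏ i, (Nat.card (Hsub p Q g i) : ℝ≥0∞))⁻¹)
            + (Nat.card (AddSubgroup G) : ℝ≥0∞) * ((p : ℝ≥0∞) ^ n)⁻¹ := add_le_add h1 h2
end
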